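/- Π₁-definability of iterated p̃re: let S be a CPN all of whose guards are in Σ₁. Then for every closed formula φ in Π₁ and every positive integer k, one can effectively construct a closed formula in Π₁ defining the set ⋂_{0 ≤ i ≤ k} p̃re_S^i(⟦φ⟧). -/

import Mathlib

/-!
Generic framework: Colored Markings Logic (CML) and Constrained Petri Nets (CPN),
following Bouajjani, Drăgoi, Enea, Jurski, Sighireanu,
"A Generic Framework for Reasoning about Dynamic Networks of Infinite-State Processes".
-/

namespace CML

/-- Color terms of `CML(ℂ^N, Ω, Ξ)`: color variables, `δ_k(x)` (the `k`-th color of the token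
denoted by token variable `x`), and applications of operation symbols from `Ω`. -/
inductive Term (N : ℕ) (Ω : Type) : Type
  | cvar : ℕ → Term N Ω
  | delta : Fin N → ℕ → Term N Ω
  | op : Ω → (n : ℕ) → (Fin n → Term N Ω) → Term N Ω

/-- Formulas of `CML(ℂ^N, Ω, Ξ)` over places `P` (with `none` playing the role of `⊥`):
`true`, token equalities, place membership `p(x)`, color atoms `r(t₁,…,t_m)`,
negation, disjunction, and existential quantification over token and color variables. -/
inductive Formula (P : Type) (N : ℕ) (Ω : Type) (Ξ : Type) : Type
  | tru : Formula P N Ω Ξ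
  | teq : ℕ → ℕ → Formula P N Ω Ξ
  | place : Option P → ℕ → Formula P N Ω Ξ
  | rel : Ξ → (n : ℕ) → (Fin n → Term N Ω) → Formula P N Ω Ξ
  | not : Formula P N Ω Ξ → Formula P N Ω Ξ
  | or : Formula P N Ω Ξ → Formula P N Ω Ξ → Formula P N Ω Ξ
  | exT : ℕ → Formula P N Ω Ξ → Formula P N Ω Ξ
  | exC : ℕ → Formula P N Ω Ξ → Formula P N Ω Ξ

variable {P : Type} {N : ℕ} {Ω : Type} {Ξ : Type} {C : Type}

/-- Derived conjunction. -/
def Formula.and (φ ψ : Formula P N Ω Ξ) : Formula P N Ω Ξ := .not (.or (.not φ) (.not ψ))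

/-- An interpretation of the operation and relation symbols on the color domain `C`. -/
structure Interp (C : Type) (Ω : Type) (Ξ : Type) where
  opI : Ω → List C → C
  relI : Ξ → List C → Prop

/-- An `N`-dim colored marking: each token (a natural number) is assigned its place
(`none` = `⊥`, i.e. undefined) and its `N` colors. -/
abbrev Marking (P : Type) (N : ℕ) (C : Type) : Type := ℕ → Option P × (Fin N → C)

/-- Value of a color term in a marking, under token/color valuations `θ`, `ν`. -/
def Term.val (I : Interp C Ω Ξ) (M : Marking P N C) (θ : ℕ → ℕ) (ν : ℕ → C) :
    Term N Ω → C
  | .cvar z => ν z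
  | .delta k x => (M (θ x)).2 k
  | .op o n f => I.opI o (List.ofFn fun i => (f i).val I M θ ν)

/-- The satisfaction relation `M ⊨_{θ,ν} φ`. -/
def Formula.Sat (I : Interp C Ω Ξ) (M : Marking P N C) :
    (ℕ → ℕ) → (ℕ → C) → Formula P N Ω Ξ → Prop
  | _, _, .tru => True
  | θ, _, .teq x y => θ x = θ y
  | θ, _, .place p x => (M (θ x)).1 = p
  | θ, ν, .rel r _ f => I.relI r (List.ofFn fun i => (f i).val I M θ ν)
  | θ, ν, .not φ => ¬ Formula.Sat I M θ ν φ
  | θ, ν, .or φ ψ => Formula.Sat I M θ ν φ ∨ Formula.Sat I M θ ν ψ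
  | θ, ν, .exT x φ => ∃ t : ℕ, Formula.Sat I M (Function.update θ x t) ν φ
  | θ, ν, .exC z φ => ∃ c : C, Formula.Sat I M θ (Function.update ν z c) φ

/-- A formula is satisfiable iff some marking and valuations satisfy it. -/
def Formula.Satisfiable (I : Interp C Ω Ξ) (φ : Formula P N Ω Ξ) : Prop :=
  ∃ (M : Marking P N C) (θ : ℕ → ℕ) (ν : ℕ → C), φ.Sat I M θ ν

/-- The set `⟦φ⟧` of markings satisfying a (closed) formula `φ`. -/
def Formula.models (I : Interp C Ω Ξ) (φ : Formula P N Ω Ξ) : Set (Marking P N C) :=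
  {M | ∀ θ ν, φ.Sat I M θ ν}

/-- Tokens variables occurring in a term (inside `δ_k(·)`). -/
def Term.tvars : Term N Ω → List ℕ
  | .cvar _ => []
  | .delta _ x => [x]
  | .op _ _ f => (List.ofFn fun i => (f i).tvars).flatten

/-- Color variables occurring in a term. -/
def Term.cvars : Term N Ω → List ℕ
  | .cvar z => [z]
  | .delta _ _ => []
  | .op _ _ f => (List.ofFn fun i => (f i).cvars).flatten

/-- Free token variables of a formula. -/
def Formula.freeT : Formula P N Ω Ξ → List ℕ
  | .tru => []
  | .teq x y => [x, y]
  | .place _ x => [x]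
  | .rel _ _ f => (List.ofFn fun i => (f i).tvars).flatten
  | .not φ => φ.freeT
  | .or φ ψ => φ.freeT ++ ψ.freeT
  | .exT x φ => φ.freeT.filter (fun v => v != x)
  | .exC _ φ => φ.freeT

/-- Free color variables of a formula. -/
def Formula.freeC : Formula P N Ω Ξ → List ℕ
  | .tru => []
  | .teq _ _ => []
  | .place _ _ => []
  | .rel _ _ f => (List.ofFn fun i => (f i).cvars).flatten
  | .not φ => φ.freeC
  | .or φ ψ => φ.freeC ++ ψ.freeC
  | .exT _ φ => φ.freeC
  | .exC z φ => φ.freeC.filter (fun v => v != z)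

/-- A closed formula has no free (token or color) variables. -/
def Formula.Closed (φ : Formula P N Ω Ξ) : Prop := φ.freeT = [] ∧ φ.freeC = []

/-- Quantifier-free formulas. -/
inductive IsQF : Formula P N Ω Ξ → Prop
  | tru : IsQF .tru
  | teq {x y} : IsQF (.teq x y)
  | place {p x} : IsQF (.place p x)
  | rel {r n f} : IsQF (.rel r n f)
  | not {φ} : IsQF φ → IsQF (.not φ)
  | or {φ ψ} : IsQF φ → IsQF ψ → IsQF (.or φ ψ)

/-- Formulas in prenex normal form (universal quantification `∀y.φ` is `¬∃y.¬φ`). -/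
inductive IsPrenex : Formula P N Ω Ξ → Prop
  | of_qf {φ} : IsQF φ → IsPrenex φ
  | exT {x φ} : IsPrenex φ → IsPrenex (.exT x φ)
  | exC {z φ} : IsPrenex φ → IsPrenex (.exC z φ)
  | allT {x φ} : IsPrenex φ → IsPrenex (.not (.exT x (.not φ)))
  | allC {z φ} : IsPrenex φ → IsPrenex (.not (.exC z (.not φ)))

/-- The fragment `Σ₀ = Π₀`: prenex formulas all of whose quantified variables are
color variables. -/
inductive InSigma0 : Formula P N Ω Ξ → Prop
  | of_qf {φ} : IsQF φ → InSigma0 φ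
  | exC {z φ} : InSigma0 φ → InSigma0 (.exC z φ)
  | allC {z φ} : InSigma0 φ → InSigma0 (.not (.exC z (.not φ)))

mutual
  /-- The fragment `Σ_n` of the quantifier alternation hierarchy. -/
  inductive InSigma : ℕ → Formula P N Ω Ξ → Prop
    | zero {φ} : InSigma0 φ → InSigma 0 φ
    | of_pi {n φ} : InPi n φ → InSigma (n + 1) φ
    | exT {n x φ} : InSigma (n + 1) φ → InSigma (n + 1) (.exT x φ)
    | exC {n z φ} : InSigma (n + 1) φ → InSigma (n + 1) (.exC z φ)
  /-- The fragment `Π_n` of the quantifier alternation hierarchy. -/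
  inductive InPi : ℕ → Formula P N Ω Ξ → Prop
    | zero {φ} : InSigma0 φ → InPi 0 φ
    | of_sigma {n φ} : InSigma n φ → InPi (n + 1) φ
    | allT {n x φ} : InPi (n + 1) φ → InPi (n + 1) (.not (.exT x (.not φ)))
    | allC {n z φ} : InPi (n + 1) φ → InPi (n + 1) (.not (.exC z (.not φ)))
end

/-- `B(Σ_n)`: boolean combinations of `Σ_n` formulas. -/
inductive InBSigma (n : ℕ) : Formula P N Ω Ξ → Prop
  | base {φ} : InSigma n φ → InBSigma n φ
  | not {φ} : InBSigma n φ → InBSigma n (.not φ)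
  | or {φ ψ} : InBSigma n φ → InBSigma n ψ → InBSigma n (.or φ ψ)

/-- Terms of the color logic `FO(ℂ,Ω,Ξ)`: no `δ_k(x)`. -/
inductive Term.IsPure : Term N Ω → Prop
  | cvar {z} : IsPure (.cvar z)
  | op {o n f} : (∀ i, IsPure (f i)) → IsPure (.op o n f)

/-- Formulas of the color logic `FO(ℂ,Ω,Ξ)` (viewed inside CML): no token atoms, no token
quantifiers, and no `δ_k(x)` terms. -/
inductive Formula.IsColor : Formula P N Ω Ξ → Prop
  | tru : IsColor .tru
  | rel {r n f} : (∀ i, Term.IsPure (f i)) → IsColor (.rel r n f)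
  | not {φ} : IsColor φ → IsColor (.not φ)
  | or {φ ψ} : IsColor φ → IsColor ψ → IsColor (.or φ ψ)
  | exC {z φ} : IsColor φ → IsColor (.exC z φ)

/-- Iterated existential token quantification `∃x₁…x_k.φ`. -/
def exTs (xs : List ℕ) (φ : Formula P N Ω Ξ) : Formula P N Ω Ξ :=
  xs.foldr (fun x ψ => .exT x ψ) φ

/-- Iterated existential color quantification `∃z₁…z_k.φ`. -/
def exCs (zs : List ℕ) (φ : Formula P N Ω Ξ) : Formula P N Ω Ξ :=
  zs.foldr (fun z ψ => .exC z ψ) φ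

/-- Iterated universal token quantification `∀y₁…y_k.φ`. -/
def allTs (ys : List ℕ) (φ : Formula P N Ω Ξ) : Formula P N Ω Ξ :=
  ys.foldr (fun y ψ => .not (.exT y (.not ψ))) φ

/-- A canonical injective numerical encoding of terms (given encodings of the symbols). -/
def Term.enc [Encodable Ω] : Term N Ω → ℕ
  | .cvar z => Nat.pair 0 z
  | .delta k x => Nat.pair 1 (Nat.pair k.val x)
  | .op o _ f =>
      Nat.pair 2 (Nat.pair (Encodable.encode o) (Encodable.encode (List.ofFn fun i => (f i).enc)))

/-- A canonical injective numerical encoding of formulas (given encodings of the symbols). -/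
def Formula.enc [Encodable P] [Encodable Ω] [Encodable Ξ] : Formula P N Ω Ξ → ℕ
  | .tru => Nat.pair 0 0
  | .teq x y => Nat.pair 1 (Nat.pair x y)
  | .place p x => Nat.pair 2 (Nat.pair (Encodable.encode p) x)
  | .rel r _ f =>
      Nat.pair 3 (Nat.pair (Encodable.encode r) (Encodable.encode (List.ofFn fun i => (f i).enc)))
  | .not φ => Nat.pair 4 φ.enc
  | .or φ ψ => Nat.pair 5 (Nat.pair φ.enc ψ.enc)
  | .exT x φ => Nat.pair 6 (Nat.pair x φ.enc)
  | .exC z φ => Nat.pair 7 (Nat.pair z φ.enc)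

end CML

namespace CML

variable {P : Type} {N : ℕ} {Ω : Type} {Ξ : Type} {C : Type}

/-- Token variables occurring (in token position) in equality or place-membership atoms. -/
def Formula.atomTVars : Formula P N Ω Ξ → List ℕ
  | .tru => []
  | .teq x y => [x, y]
  | .place _ x => [x]
  | .rel _ _ _ => []
  | .not φ => φ.atomTVars
  | .or φ ψ => φ.atomTVars ++ ψ.atomTVars
  | .exT _ φ => φ.atomTVars
  | .exC _ φ => φ.atomTVars

/-- A strict upper bound on all color-variable names occurring (free or bound) in a term. -/
def Term.cvarBound : Term N Ω → ℕ
  | .cvar z => z + 1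
  | .delta _ _ => 0
  | .op _ _ f => (List.ofFn fun i => (f i).cvarBound).foldr max 0

/-- A strict upper bound on all color-variable names occurring (free or bound) in a formula. -/
def Formula.cvarBound : Formula P N Ω Ξ → ℕ
  | .tru => 0
  | .teq _ _ => 0
  | .place _ _ => 0
  | .rel _ _ f => (List.ofFn fun i => (f i).cvarBound).foldr max 0
  | .not φ => φ.cvarBound
  | .or φ ψ => max φ.cvarBound ψ.cvarBound
  | .exT _ φ => φ.cvarBound
  | .exC z φ => max (z + 1) φ.cvarBound

/-- Substitute, for every token variable `x` with `σ x = some g`, each term `δ_k(x)`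
by the color variable `g k`. -/
def Term.substDelta (σ : ℕ → Option (Fin N → ℕ)) : Term N Ω → Term N Ω
  | .cvar z => .cvar z
  | .delta k x => match σ x with
      | some g => .cvar (g k)
      | none => .delta k x
  | .op o n f => .op o n (fun i => (f i).substDelta σ)

/-- Substitute, for every token variable `x` with `σ x = some g`, each term `δ_k(x)`
by the color variable `g k`, in a formula. -/
def Formula.substDelta (σ : ℕ → Option (Fin N → ℕ)) : Formula P N Ω Ξ → Formula P N Ω Ξ
  | .tru => .tru
  | .teq x y => .teq x y
  | .place p x => .place p x
  | .rel r n f => .rel r n (fun i => (f i).substDelta σ)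
  | .not φ => .not (φ.substDelta σ)
  | .or φ ψ => .or (φ.substDelta σ) (ψ.substDelta σ)
  | .exT x φ => .exT x (φ.substDelta (fun v => if v = x then none else σ v))
  | .exC z φ => .exC z (φ.substDelta σ)

/-- Substitution of token variables in a term. -/
def Term.substT (σ : ℕ → ℕ) : Term N Ω → Term N Ω
  | .cvar z => .cvar z
  | .delta k x => .delta k (σ x)
  | .op o n f => .op o n (fun i => (f i).substT σ)

/-- Substitution of (free) token variables in a formula. -/
def Formula.substT (σ : ℕ → ℕ) : Formula P N Ω Ξ → Formula P N Ω Ξ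
  | .tru => .tru
  | .teq x y => .teq (σ x) (σ y)
  | .place p x => .place p (σ x)
  | .rel r n f => .rel r n (fun i => (f i).substT σ)
  | .not φ => .not (φ.substT σ)
  | .or φ ψ => .or (φ.substT σ) (ψ.substT σ)
  | .exT x φ => .exT x (φ.substT (Function.update σ x x))
  | .exC z φ => .exC z (φ.substT σ)

/-- A constrained transition `p₁,…,p_n ↪ q₁,…,q_m : ψ` of a Constrained Petri Net.
The token variables `x₁,…,x_n` are represented by `0,…,n-1` and the token variables
`y₁,…,y_m` by `n,…,n+m-1` in the guard. -/
structure Transition (P : Type) (N : ℕ) (Ω : Type) (Ξ : Type) where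
  pre : List P
  post : List P
  guard : Formula P N Ω Ξ
  /-- `FV(guard) ⊆ {x₁,…,x_n} ∪ {y₁,…,y_m}`. -/
  guard_freeT : ∀ v ∈ guard.freeT, v < pre.length + post.length
  /-- The guard has no free color variables. -/
  guard_freeC : guard.freeC = []
  /-- All occurrences of the variables `y_j` are inside terms of the form `δ_k(y_j)`. -/
  guard_created : ∀ j < post.length, (pre.length + j) ∉ guard.atomTVars

/-- The transition relation `M →_τ M'` induced by a single constrained transition:
pairwise distinct tokens `t_i` are removed from the places `pre[i]`, pairwise distinct
tokens `t'_j` are created in the places `post[j]`, all other tokens are unchanged, and the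
guard holds in `M` with `x_i` interpreted as `t_i` and each `δ_k(y_j)` replaced by the
`k`-th color of `t'_j` in `M'` (via fresh color variables). -/
def Transition.Step (I : Interp C Ω Ξ) (τ : Transition P N Ω Ξ)
    (M M' : Marking P N C) : Prop :=
  ∃ ts us : List ℕ,
    ts.length = τ.pre.length ∧ us.length = τ.post.length ∧
    ts.Nodup ∧ us.Nodup ∧
    (∀ i < τ.pre.length, (M (ts.getD i 0)).1 = τ.pre[i]? ∧ (M' (ts.getD i 0)).1 = none) ∧
    (∀ j < τ.post.length, (M (us.getD j 0)).1 = none ∧ (M' (us.getD j 0)).1 = τ.post[j]?) ∧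
    (∀ t : ℕ, t ∉ ts → t ∉ us → M t = M' t) ∧
    (let n := τ.pre.length
     let m := τ.post.length
     let B := τ.guard.cvarBound
     let σ : ℕ → Option (Fin N → ℕ) := fun v =>
       if n ≤ v ∧ v < n + m then some (fun k => B + (v - n) * N + k.val) else none
     ∃ ν : ℕ → C,
       (∀ j < m, ∀ k : Fin N, ν (B + j * N + k.val) = (M' (us.getD j 0)).2 k) ∧
       (τ.guard.substDelta σ).Sat I M (fun v => ts.getD v 0) ν)

/-- `post_τ(𝓜)`: immediate successors of markings in `𝓜` under the transition `τ`. -/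
def Transition.postImg (I : Interp C Ω Ξ) (τ : Transition P N Ω Ξ)
    (X : Set (Marking P N C)) : Set (Marking P N C) :=
  {M' | ∃ M ∈ X, τ.Step I M M'}

/-- A Constrained Petri Net: a finite set (list) of constrained transitions. -/
structure CPN (P : Type) (N : ℕ) (Ω : Type) (Ξ : Type) where
  trans : List (Transition P N Ω Ξ)

/-- All guards of the CPN lie in the fragment `frag`. -/
def CPN.GuardsIn (S : CPN P N Ω Ξ) (frag : Formula P N Ω Ξ → Prop) : Prop :=
  ∀ τ ∈ S.trans, frag τ.guard

/-- The transition relation `M →_S M'` of a CPN. -/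
def CPN.Step (I : Interp C Ω Ξ) (S : CPN P N Ω Ξ) (M M' : Marking P N C) : Prop :=
  ∃ τ ∈ S.trans, τ.Step I M M'

/-- `post_S(𝓜)`: immediate successors of markings in `𝓜`. -/
def CPN.post (I : Interp C Ω Ξ) (S : CPN P N Ω Ξ)
    (X : Set (Marking P N C)) : Set (Marking P N C) :=
  {M' | ∃ M ∈ X, CPN.Step I S M M'}

/-- `pre_S(𝓜)`: immediate predecessors of markings in `𝓜`. -/
def CPN.pre (I : Interp C Ω Ξ) (S : CPN P N Ω Ξ)
    (X : Set (Marking P N C)) : Set (Marking P N C) :=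
  {M | ∃ M' ∈ X, CPN.Step I S M M'}

/-- `p̃re_S(𝓜)`: the complement of `pre_S` applied to the complement of `𝓜`. -/
def CPN.preTilde (I : Interp C Ω Ξ) (S : CPN P N Ω Ξ)
    (X : Set (Marking P N C)) : Set (Marking P N C) :=
  (CPN.pre I S Xᶜ)ᶜ

/-- A canonical numerical encoding of a constrained transition. -/
def Transition.enc [Encodable P] [Encodable Ω] [Encodable Ξ] (τ : Transition P N Ω Ξ) : ℕ :=
  Nat.pair (Encodable.encode τ.pre) (Nat.pair (Encodable.encode τ.post) τ.guard.enc)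

/-- A canonical numerical encoding of a CPN. -/
def CPN.enc [Encodable P] [Encodable Ω] [Encodable Ξ] (S : CPN P N Ω Ξ) : ℕ :=
  Encodable.encode (S.trans.map Transition.enc)

/-- `M'` is a sub-marking of `M`: all tokens defined in `M'` are mapped identically by `M`. -/
def SubMarking (M' M : Marking P N C) : Prop :=
  ∀ t : ℕ, (M' t).1 ≠ none → M' t = M t

/-- Upward closure of a set of markings w.r.t. the sub-marking ordering. -/
def UpClosure (X : Set (Marking P N C)) : Set (Marking P N C) :=
  {M | ∃ M' ∈ X, SubMarking M' M}

/-- All ways to map the list of variables `ys` (pointwise) to variables from `xs`: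
each resulting list `l` has `l.length = ys.length` and entries from `xs`. -/
def allMaps : List ℕ → List ℕ → List (List ℕ)
  | [], _ => [[]]
  | _ :: ys, xs => (xs.map (fun v => (allMaps ys xs).map (fun l => v :: l))).flatten

/-- The substitution sending the `i`-th element of `ys` to the `i`-th element of `l`
(and any other variable to itself). -/
def mkSub (ys l : List ℕ) : ℕ → ℕ :=
  fun v => if v ∈ ys then l.getD (ys.idxOf v) v else v

/-- Conjunction of a list of formulas. -/
def conjList : List (Formula P N Ω Ξ) → Formula P N Ω Ξ
  | [] => .tru
  | φ :: l => φ.and (conjList l)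

/-- Formulas in special form: no unrelativized place-membership atoms; token quantification
is relativized, `∃x ∈ p. φ` (i.e. `∃x. p(x) ∧ φ`). -/
inductive SpecialForm : Formula P N Ω Ξ → Prop
  | tru : SpecialForm .tru
  | teq {x y} : SpecialForm (.teq x y)
  | rel {r n f} : SpecialForm (.rel r n f)
  | not {φ} : SpecialForm φ → SpecialForm (.not φ)
  | or {φ ψ} : SpecialForm φ → SpecialForm ψ → SpecialForm (.or φ ψ)
  | exC {z φ} : SpecialForm φ → SpecialForm (.exC z φ)
  | exTp {x p φ} : SpecialForm φ → SpecialForm (.exT x (Formula.and (.place p x) φ))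

end CML

namespace CML

variable {P : Type} {N : ℕ} {Ω : Type} {Ξ : Type} {C : Type}

/-- Logical equivalence of formulas: satisfaction by the same markings under the same
valuations of the free variables. -/
def Equivalent (I : Interp C Ω Ξ) (φ ψ : Formula P N Ω Ξ) : Prop :=
  ∀ (M : Marking P N C) (θ : ℕ → ℕ) (ν : ℕ → C), (φ.Sat I M θ ν ↔ ψ.Sat I M θ ν)

end CML



namespace CML

variable {P : Type} {N : ℕ} {Ω : Type} {Ξ : Type} {C : Type}
variable {I : Interp C Ω Ξ} {M : Marking P N C}

/-! ### coincidence -/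

theorem List.mem_foldr_max {a : ℕ} : ∀ {l : List ℕ}, a ∈ l → a ≤ l.foldr max 0
  | b :: t, h => by
    rcases List.mem_cons.1 h with rfl | h
    · simp [List.foldr]
    · exact le_trans (List.mem_foldr_max h) (by simp [List.foldr])

theorem Term.val_congr {θ θ' : ℕ → ℕ} {ν ν' : ℕ → C} :
    ∀ {t : Term N Ω}, (∀ x ∈ t.tvars, θ x = θ' x) → (∀ z ∈ t.cvars, ν z = ν' z) →
      t.val I M θ ν = t.val I M θ' ν'
  | .cvar z, _, hc => by simp [Term.val, hc z (by simp [Term.cvars])]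
  | .delta k x, ht, _ => by simp [Term.val, ht x (by simp [Term.tvars])]
  | .op o n f, ht, hc => by
      simp only [Term.val]
      have : ∀ i, (f i).val I M θ ν = (f i).val I M θ' ν' := fun i =>
        Term.val_congr (fun x hx => ht x (by
            simp only [Term.tvars, List.mem_flatten]
            exact ⟨(f i).tvars, List.mem_ofFn.2 ⟨i, rfl⟩, hx⟩))
          (fun z hz => hc z (by
            simp only [Term.cvars, List.mem_flatten]
            exact ⟨(f i).cvars, List.mem_ofFn.2 ⟨i, rfl⟩, hz⟩))
      simp only [this]

theorem Formula.sat_congr : ∀ {φ : Formula P N Ω Ξ} {θ θ' : ℕ → ℕ} {ν ν' : ℕ → C},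
    (∀ x ∈ φ.freeT, θ x = θ' x) → (∀ z ∈ φ.freeC, ν z = ν' z) →
      (φ.Sat I M θ ν ↔ φ.Sat I M θ' ν')
  | .tru, _, _, _, _, _, _ => Iff.rfl
  | .teq x y, _, _, _, _, ht, _ => by
      simp [Formula.Sat, ht x (by simp [Formula.freeT]), ht y (by simp [Formula.freeT])]
  | .place p x, _, _, _, _, ht, _ => by
      simp [Formula.Sat, ht x (by simp [Formula.freeT])]
  | .rel r n f, _, _, _, _, ht, hc => by
      simp only [Formula.Sat]
      have : ∀ i, (f i).val I M _ _ = (f i).val I M _ _ := fun i => Term.val_congr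
          (fun x hx => ht x (by
            simp only [Formula.freeT, List.mem_flatten]
            exact ⟨(f i).tvars, List.mem_ofFn.2 ⟨i, rfl⟩, hx⟩))
          (fun z hz => hc z (by
            simp only [Formula.freeC, List.mem_flatten]
            exact ⟨(f i).cvars, List.mem_ofFn.2 ⟨i, rfl⟩, hz⟩))
      simp only [this]
  | .not φ, _, _, _, _, ht, hc => by
      simp only [Formula.Sat]
      exact not_congr (Formula.sat_congr (fun x hx => ht x hx) (fun z hz => hc z hz))
  | .or φ ψ, _, _, _, _, ht, hc => by
      simp only [Formula.Sat]
      exact or_congr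
        (Formula.sat_congr (fun x hx => ht x (by simp [Formula.freeT, hx]))
          (fun z hz => hc z (by simp [Formula.freeC, hz])))
        (Formula.sat_congr (fun x hx => ht x (by simp [Formula.freeT, hx]))
          (fun z hz => hc z (by simp [Formula.freeC, hz])))
  | .exT x φ, θ, θ', _, _, ht, hc => by
      simp only [Formula.Sat]
      refine exists_congr fun t => Formula.sat_congr (fun y hy => ?_) hc
      by_cases h : y = x
      · subst h; simp [Function.update]
      · simp only [Function.update, dif_neg h]
        exact ht y (by simp [Formula.freeT, List.mem_filter, hy, h])
  | .exC z φ, _, _, ν, ν', ht, hc => by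
      simp only [Formula.Sat]
      refine exists_congr fun c => Formula.sat_congr ht (fun w hw => ?_)
      by_cases h : w = z
      · subst h; simp [Function.update]
      · simp only [Function.update, dif_neg h]
        exact hc w (by simp [Formula.freeC, List.mem_filter, hw, h])

theorem Formula.sat_closed_congr {φ : Formula P N Ω Ξ} (h : φ.Closed)
    {θ θ' : ℕ → ℕ} {ν ν' : ℕ → C} : φ.Sat I M θ ν ↔ φ.Sat I M θ' ν' :=
  Formula.sat_congr (by simp [h.1]) (by simp [h.2])

theorem Formula.mem_models_iff_sat [Nonempty C] {φ : Formula P N Ω Ξ} (h : φ.Closed)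
    {θ : ℕ → ℕ} {ν : ℕ → C} : M ∈ φ.models I ↔ φ.Sat I M θ ν := by
  constructor
  · exact fun hm => hm θ ν
  · intro hs θ' ν'
    exact (Formula.sat_closed_congr h).1 hs

end CML


namespace CML

variable {P : Type} {N : ℕ} {Ω : Type} {Ξ : Type} {C : Type}
variable {I : Interp C Ω Ξ} {M : Marking P N C}

/-! ### sizes, variable bounds, substitutions -/

def Formula.fsize : Formula P N Ω Ξ → ℕ
  | .not φ => φ.fsize + 1
  | .or φ ψ => φ.fsize + ψ.fsize + 1
  | .exT _ φ => φ.fsize + 1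
  | .exC _ φ => φ.fsize + 1
  | _ => 1

def Formula.boundT : Formula P N Ω Ξ → List ℕ
  | .not φ => φ.boundT
  | .or φ ψ => φ.boundT ++ ψ.boundT
  | .exT x φ => x :: φ.boundT
  | .exC _ φ => φ.boundT
  | _ => []

def Formula.boundC : Formula P N Ω Ξ → List ℕ
  | .not φ => φ.boundC
  | .or φ ψ => φ.boundC ++ ψ.boundC
  | .exT _ φ => φ.boundC
  | .exC z φ => z :: φ.boundC
  | _ => []

def Term.tvarSup : Term N Ω → ℕ
  | .cvar _ => 0
  | .delta _ x => x + 1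
  | .op _ _ f => (List.ofFn fun i => (f i).tvarSup).foldr max 0

def Formula.tvarSup : Formula P N Ω Ξ → ℕ
  | .tru => 0
  | .teq x y => max (x + 1) (y + 1)
  | .place _ x => x + 1
  | .rel _ _ f => (List.ofFn fun i => (f i).tvarSup).foldr max 0
  | .not φ => φ.tvarSup
  | .or φ ψ => max φ.tvarSup ψ.tvarSup
  | .exT x φ => max (x + 1) φ.tvarSup
  | .exC _ φ => φ.tvarSup

def Term.substC (σ : ℕ → ℕ) : Term N Ω → Term N Ω
  | .cvar z => .cvar (σ z)
  | .delta k x => .delta k x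
  | .op o n f => .op o n fun i => (f i).substC σ

def Formula.substC (σ : ℕ → ℕ) : Formula P N Ω Ξ → Formula P N Ω Ξ
  | .tru => .tru
  | .teq x y => .teq x y
  | .place p x => .place p x
  | .rel r n f => .rel r n fun i => (f i).substC σ
  | .not φ => .not (φ.substC σ)
  | .or φ ψ => .or (φ.substC σ) (ψ.substC σ)
  | .exT x φ => .exT x (φ.substC σ)
  | .exC z φ => .exC z (φ.substC (Function.update σ z z))

theorem Term.lt_tvarSup : ∀ {t : Term N Ω} {x : ℕ}, x ∈ t.tvars → x < t.tvarSup
  | .delta k y, x, h => by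
      simp [Term.tvars] at h; simp [Term.tvarSup, h]
  | .op o n f, x, h => by
      simp only [Term.tvars, List.mem_flatten] at h
      obtain ⟨l, hl, hx⟩ := h
      obtain ⟨i, rfl⟩ := List.mem_ofFn.1 hl
      exact lt_of_lt_of_le (Term.lt_tvarSup hx)
        (List.mem_foldr_max (List.mem_ofFn.2 ⟨i, rfl⟩))

theorem Term.lt_cvarBound : ∀ {t : Term N Ω} {z : ℕ}, z ∈ t.cvars → z < t.cvarBound
  | .cvar w, z, h => by
      simp [Term.cvars] at h; simp [Term.cvarBound, h]
  | .op o n f, z, h => by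
      simp only [Term.cvars, List.mem_flatten] at h
      obtain ⟨l, hl, hx⟩ := h
      obtain ⟨i, rfl⟩ := List.mem_ofFn.1 hl
      exact lt_of_lt_of_le (Term.lt_cvarBound hx)
        (List.mem_foldr_max (List.mem_ofFn.2 ⟨i, rfl⟩))

theorem Formula.freeT_lt_tvarSup : ∀ {φ : Formula P N Ω Ξ} {x : ℕ},
    x ∈ φ.freeT → x < φ.tvarSup
  | .teq a b, x, h => by
      simp [Formula.freeT] at h; rcases h with rfl | rfl <;> simp [Formula.tvarSup] <;> omega
  | .place p a, x, h => by
      simp [Formula.freeT] at h; simp [Formula.tvarSup, h]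
  | .rel r n f, x, h => by
      simp only [Formula.freeT, List.mem_flatten] at h
      obtain ⟨l, hl, hx⟩ := h
      obtain ⟨i, rfl⟩ := List.mem_ofFn.1 hl
      exact lt_of_lt_of_le (Term.lt_tvarSup hx)
        (List.mem_foldr_max (List.mem_ofFn.2 ⟨i, rfl⟩))
  | .not φ, x, h => Formula.freeT_lt_tvarSup (φ := φ) h
  | .or φ ψ, x, h => by
      simp only [Formula.freeT, List.mem_append] at h
      rcases h with h | h
      · exact lt_of_lt_of_le (Formula.freeT_lt_tvarSup h) (by simp [Formula.tvarSup])
      · exact lt_of_lt_of_le (Formula.freeT_lt_tvarSup h) (by simp [Formula.tvarSup])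
  | .exT y φ, x, h => by
      simp only [Formula.freeT, List.mem_filter] at h
      exact lt_of_lt_of_le (Formula.freeT_lt_tvarSup h.1) (by simp [Formula.tvarSup])
  | .exC z φ, x, h => Formula.freeT_lt_tvarSup (φ := φ) h

theorem Formula.boundT_lt_tvarSup : ∀ {φ : Formula P N Ω Ξ} {x : ℕ},
    x ∈ φ.boundT → x < φ.tvarSup
  | .not φ, x, h => Formula.boundT_lt_tvarSup (φ := φ) h
  | .or φ ψ, x, h => by
      simp only [Formula.boundT, List.mem_append] at h
      rcases h with h | h
      · exact lt_of_lt_of_le (Formula.boundT_lt_tvarSup h) (by simp [Formula.tvarSup])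
      · exact lt_of_lt_of_le (Formula.boundT_lt_tvarSup h) (by simp [Formula.tvarSup])
  | .exT y φ, x, h => by
      simp only [Formula.boundT, List.mem_cons] at h
      rcases h with rfl | h
      · simp [Formula.tvarSup]
      · exact lt_of_lt_of_le (Formula.boundT_lt_tvarSup h) (by simp [Formula.tvarSup])
  | .exC z φ, x, h => Formula.boundT_lt_tvarSup (φ := φ) h
  | .tru, x, h => by simp [Formula.boundT] at h
  | .teq _ _, x, h => by simp [Formula.boundT] at h
  | .place _ _, x, h => by simp [Formula.boundT] at h
  | .rel _ _ _, x, h => by simp [Formula.boundT] at h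

theorem Formula.freeC_lt_cvarBound : ∀ {φ : Formula P N Ω Ξ} {z : ℕ},
    z ∈ φ.freeC → z < φ.cvarBound
  | .rel r n f, z, h => by
      simp only [Formula.freeC, List.mem_flatten] at h
      obtain ⟨l, hl, hx⟩ := h
      obtain ⟨i, rfl⟩ := List.mem_ofFn.1 hl
      exact lt_of_lt_of_le (Term.lt_cvarBound hx)
        (List.mem_foldr_max (List.mem_ofFn.2 ⟨i, rfl⟩))
  | .not φ, z, h => Formula.freeC_lt_cvarBound (φ := φ) h
  | .or φ ψ, z, h => by
      simp only [Formula.freeC, List.mem_append] at h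
      rcases h with h | h
      · exact lt_of_lt_of_le (Formula.freeC_lt_cvarBound h) (by simp [Formula.cvarBound])
      · exact lt_of_lt_of_le (Formula.freeC_lt_cvarBound h) (by simp [Formula.cvarBound])
  | .exT y φ, z, h => Formula.freeC_lt_cvarBound (φ := φ) h
  | .exC w φ, z, h => by
      simp only [Formula.freeC, List.mem_filter] at h
      exact lt_of_lt_of_le (Formula.freeC_lt_cvarBound h.1) (by simp [Formula.cvarBound])
  | .tru, z, h => by simp [Formula.freeC] at h
  | .teq _ _, z, h => by simp [Formula.freeC] at h
  | .place _ _, z, h => by simp [Formula.freeC] at h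

theorem Formula.boundC_lt_cvarBound : ∀ {φ : Formula P N Ω Ξ} {z : ℕ},
    z ∈ φ.boundC → z < φ.cvarBound
  | .not φ, z, h => Formula.boundC_lt_cvarBound (φ := φ) h
  | .or φ ψ, z, h => by
      simp only [Formula.boundC, List.mem_append] at h
      rcases h with h | h
      · exact lt_of_lt_of_le (Formula.boundC_lt_cvarBound h) (by simp [Formula.cvarBound])
      · exact lt_of_lt_of_le (Formula.boundC_lt_cvarBound h) (by simp [Formula.cvarBound])
  | .exT y φ, z, h => Formula.boundC_lt_cvarBound (φ := φ) h
  | .exC w φ, z, h => by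
      simp only [Formula.boundC, List.mem_cons] at h
      rcases h with rfl | h
      · simp [Formula.cvarBound]
      · exact lt_of_lt_of_le (Formula.boundC_lt_cvarBound h) (by simp [Formula.cvarBound])
  | .tru, z, h => by simp [Formula.boundC] at h
  | .teq _ _, z, h => by simp [Formula.boundC] at h
  | .place _ _, z, h => by simp [Formula.boundC] at h
  | .rel _ _ _, z, h => by simp [Formula.boundC] at h

end CML


namespace CML

variable {P : Type} {N : ℕ} {Ω : Type} {Ξ : Type} {C : Type}
variable {I : Interp C Ω Ξ} {M : Marking P N C}

/-! ### semantics of substitutions -/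

theorem Term.val_substT {σ θ : ℕ → ℕ} {ν : ℕ → C} :
    ∀ {t : Term N Ω}, (t.substT σ).val I M θ ν = t.val I M (fun v => θ (σ v)) ν
  | .cvar z => rfl
  | .delta k x => rfl
  | .op o n f => by
      simp only [Term.substT, Term.val]
      have : ∀ i : Fin n, ((f i).substT σ).val I M θ ν = (f i).val I M (fun v => θ (σ v)) ν :=
        fun i => Term.val_substT
      simp only [this]

theorem Term.val_substC {σ : ℕ → ℕ} {θ : ℕ → ℕ} {ν : ℕ → C} :
    ∀ {t : Term N Ω}, (t.substC σ).val I M θ ν = t.val I M θ (fun z => ν (σ z))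
  | .cvar z => rfl
  | .delta k x => rfl
  | .op o n f => by
      simp only [Term.substC, Term.val]
      have : ∀ i : Fin n, ((f i).substC σ).val I M θ ν = (f i).val I M θ (fun z => ν (σ z)) :=
        fun i => Term.val_substC
      simp only [this]

theorem Term.tvars_substT {σ : ℕ → ℕ} :
    ∀ {t : Term N Ω}, (t.substT σ).tvars = t.tvars.map σ
  | .cvar z => rfl
  | .delta k x => rfl
  | .op o n f => by
      simp only [Term.substT, Term.tvars]
      have : ∀ i : Fin n, ((f i).substT σ).tvars = (f i).tvars.map σ :=
        fun i => Term.tvars_substT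
      simp only [this, List.map_flatten, List.map_ofFn]
      rfl

theorem Term.cvars_substT {σ : ℕ → ℕ} :
    ∀ {t : Term N Ω}, (t.substT σ).cvars = t.cvars
  | .cvar z => rfl
  | .delta k x => rfl
  | .op o n f => by
      simp only [Term.substT, Term.cvars]
      have : ∀ i : Fin n, ((f i).substT σ).cvars = (f i).cvars := fun i => Term.cvars_substT
      simp only [this]

theorem Term.cvars_substC {σ : ℕ → ℕ} :
    ∀ {t : Term N Ω}, (t.substC σ).cvars = t.cvars.map σ
  | .cvar z => rfl
  | .delta k x => rfl
  | .op o n f => by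
      simp only [Term.substC, Term.cvars]
      have : ∀ i : Fin n, ((f i).substC σ).cvars = (f i).cvars.map σ :=
        fun i => Term.cvars_substC
      simp only [this, List.map_flatten, List.map_ofFn]
      rfl

theorem Term.tvars_substC {σ : ℕ → ℕ} :
    ∀ {t : Term N Ω}, (t.substC σ).tvars = t.tvars
  | .cvar z => rfl
  | .delta k x => rfl
  | .op o n f => by
      simp only [Term.substC, Term.tvars]
      have : ∀ i : Fin n, ((f i).substC σ).tvars = (f i).tvars := fun i => Term.tvars_substC
      simp only [this]

theorem Formula.sat_substT : ∀ {φ : Formula P N Ω Ξ} {σ θ : ℕ → ℕ} {ν : ℕ → C},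
    (∀ x ∈ φ.boundT, ∀ v ∈ φ.freeT, σ v = x → v = x) →
    ((φ.substT σ).Sat I M θ ν ↔ φ.Sat I M (fun v => θ (σ v)) ν)
  | .tru, _, _, _, _ => Iff.rfl
  | .teq x y, _, _, _, _ => Iff.rfl
  | .place p x, _, _, _, _ => Iff.rfl
  | .rel r n f, σ, θ, ν, _ => by
      simp only [Formula.substT, Formula.Sat]
      have : ∀ i : Fin n, ((f i).substT σ).val I M θ ν = (f i).val I M (fun v => θ (σ v)) ν :=
        fun i => Term.val_substT
      simp only [this]
  | .not φ, σ, θ, ν, h => by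
      simp only [Formula.substT, Formula.Sat]
      exact not_congr (Formula.sat_substT (fun x hx v hv => h x hx v hv))
  | .or φ ψ, σ, θ, ν, h => by
      simp only [Formula.substT, Formula.Sat]
      exact or_congr
        (Formula.sat_substT (fun x hx v hv => h x (by simp [Formula.boundT, hx])
          v (by simp [Formula.freeT, hv])))
        (Formula.sat_substT (fun x hx v hv => h x (by simp [Formula.boundT, hx])
          v (by simp [Formula.freeT, hv])))
  | .exT x φ, σ, θ, ν, h => by
      simp only [Formula.substT, Formula.Sat]
      refine exists_congr fun t => ?_
      rw [Formula.sat_substT (σ := Function.update σ x x) (fun x' hx' v hv hσ => ?_)]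
      · refine Formula.sat_congr (fun y hy => ?_) (fun z _ => rfl)
        by_cases hyx : y = x
        · subst hyx; simp
        · have hσy : σ y ≠ x := by
            intro hc
            exact hyx (h x (by simp [Formula.boundT])
              y (by simp [Formula.freeT, List.mem_filter, hy, hyx]) hc)
          simp [Function.update, hyx, hσy]
      · by_cases hvx : v = x
        · subst hvx; simp [Function.update] at hσ; omega
        · simp only [Function.update, dif_neg hvx] at hσ
          exact h x' (by simp [Formula.boundT, hx'])
            v (by simp [Formula.freeT, List.mem_filter, hv, hvx]) hσ
  | .exC z φ, σ, θ, ν, h => by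
      simp only [Formula.substT, Formula.Sat]
      exact exists_congr fun c => Formula.sat_substT (fun x hx v hv => h x hx v hv)

theorem Formula.sat_substC : ∀ {φ : Formula P N Ω Ξ} {σ : ℕ → ℕ} {θ : ℕ → ℕ} {ν : ℕ → C},
    (∀ z ∈ φ.boundC, ∀ v ∈ φ.freeC, σ v = z → v = z) →
    ((φ.substC σ).Sat I M θ ν ↔ φ.Sat I M θ (fun v => ν (σ v)))
  | .tru, _, _, _, _ => Iff.rfl
  | .teq x y, _, _, _, _ => Iff.rfl
  | .place p x, _, _, _, _ => Iff.rfl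
  | .rel r n f, σ, θ, ν, _ => by
      simp only [Formula.substC, Formula.Sat]
      have : ∀ i : Fin n, ((f i).substC σ).val I M θ ν = (f i).val I M θ (fun v => ν (σ v)) :=
        fun i => Term.val_substC
      simp only [this]
  | .not φ, σ, θ, ν, h => by
      simp only [Formula.substC, Formula.Sat]
      exact not_congr (Formula.sat_substC (fun x hx v hv => h x hx v hv))
  | .or φ ψ, σ, θ, ν, h => by
      simp only [Formula.substC, Formula.Sat]
      exact or_congr
        (Formula.sat_substC (fun x hx v hv => h x (by simp [Formula.boundC, hx])
          v (by simp [Formula.freeC, hv])))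
        (Formula.sat_substC (fun x hx v hv => h x (by simp [Formula.boundC, hx])
          v (by simp [Formula.freeC, hv])))
  | .exT x φ, σ, θ, ν, h => by
      simp only [Formula.substC, Formula.Sat]
      exact exists_congr fun t => Formula.sat_substC (fun x hx v hv => h x hx v hv)
  | .exC z φ, σ, θ, ν, h => by
      simp only [Formula.substC, Formula.Sat]
      refine exists_congr fun c => ?_
      rw [Formula.sat_substC (σ := Function.update σ z z) (fun z' hz' v hv hσ => ?_)]
      · refine Formula.sat_congr (fun y _ => rfl) (fun w hw => ?_)
        by_cases hwz : w = z
        · subst hwz; simp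
        · have hσw : σ w ≠ z := by
            intro hc
            exact hwz (h z (by simp [Formula.boundC])
              w (by simp [Formula.freeC, List.mem_filter, hw, hwz]) hc)
          simp [Function.update, hwz, hσw]
      · by_cases hvz : v = z
        · subst hvz; simp [Function.update] at hσ; omega
        · simp only [Function.update, dif_neg hvz] at hσ
          exact h z' (by simp [Formula.boundC, hz'])
            v (by simp [Formula.freeC, List.mem_filter, hv, hvz]) hσ

end CML


namespace CML

variable {P : Type} {N : ℕ} {Ω : Type} {Ξ : Type} {C : Type}
variable {I : Interp C Ω Ξ} {M : Marking P N C}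

theorem Formula.mem_freeT_substT : ∀ {φ : Formula P N Ω Ξ} {σ : ℕ → ℕ} {v : ℕ},
    v ∈ (φ.substT σ).freeT → ∃ w ∈ φ.freeT, σ w = v
  | .tru, _, _, h => by simp [Formula.substT, Formula.freeT] at h
  | .teq x y, σ, v, h => by
      simp only [Formula.substT, Formula.freeT, List.mem_cons,
        List.not_mem_nil, or_false] at h
      rcases h with rfl | rfl
      · exact ⟨x, by simp [Formula.freeT], rfl⟩
      · exact ⟨y, by simp [Formula.freeT], rfl⟩
  | .place p x, σ, v, h => by
      simp only [Formula.substT, Formula.freeT] at h ⊢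
      simp at h
      exact ⟨x, by simp, h.symm⟩
  | .rel r n f, σ, v, h => by
      simp only [Formula.substT, Formula.freeT, List.mem_flatten] at h ⊢
      obtain ⟨l, hl, hv⟩ := h
      obtain ⟨i, rfl⟩ := List.mem_ofFn.1 hl
      simp only [Term.tvars_substT] at hv
      obtain ⟨w, hw, rfl⟩ := List.mem_map.1 hv
      exact ⟨w, ⟨(f i).tvars, List.mem_ofFn.2 ⟨i, rfl⟩, hw⟩, rfl⟩
  | .not φ, σ, v, h => Formula.mem_freeT_substT (φ := φ) h
  | .or φ ψ, σ, v, h => by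
      simp only [Formula.substT, Formula.freeT, List.mem_append] at h ⊢
      rcases h with h | h
      · obtain ⟨w, hw, hv⟩ := Formula.mem_freeT_substT h; exact ⟨w, Or.inl hw, hv⟩
      · obtain ⟨w, hw, hv⟩ := Formula.mem_freeT_substT h; exact ⟨w, Or.inr hw, hv⟩
  | .exT x φ, σ, v, h => by
      simp only [Formula.substT, Formula.freeT, List.mem_filter] at h ⊢
      obtain ⟨h1, h2⟩ := h
      obtain ⟨w, hw, hv⟩ := Formula.mem_freeT_substT h1
      by_cases hwx : w = x
      · subst hwx; simp [Function.update] at hv; simp [← hv] at h2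
      · refine ⟨w, ⟨hw, by simp [hwx]⟩, ?_⟩
        simpa [Function.update, hwx] using hv
  | .exC z φ, σ, v, h => Formula.mem_freeT_substT (φ := φ) h

theorem Formula.mem_freeC_substC : ∀ {φ : Formula P N Ω Ξ} {σ : ℕ → ℕ} {v : ℕ},
    v ∈ (φ.substC σ).freeC → ∃ w ∈ φ.freeC, σ w = v
  | .tru, _, _, h => by simp [Formula.substC, Formula.freeC] at h
  | .teq x y, σ, v, h => by simp [Formula.substC, Formula.freeC] at h
  | .place p x, σ, v, h => by simp [Formula.substC, Formula.freeC] at h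
  | .rel r n f, σ, v, h => by
      simp only [Formula.substC, Formula.freeC, List.mem_flatten] at h ⊢
      obtain ⟨l, hl, hv⟩ := h
      obtain ⟨i, rfl⟩ := List.mem_ofFn.1 hl
      simp only [Term.cvars_substC] at hv
      obtain ⟨w, hw, rfl⟩ := List.mem_map.1 hv
      exact ⟨w, ⟨(f i).cvars, List.mem_ofFn.2 ⟨i, rfl⟩, hw⟩, rfl⟩
  | .not φ, σ, v, h => Formula.mem_freeC_substC (φ := φ) h
  | .or φ ψ, σ, v, h => by
      simp only [Formula.substC, Formula.freeC, List.mem_append] at h ⊢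
      rcases h with h | h
      · obtain ⟨w, hw, hv⟩ := Formula.mem_freeC_substC h; exact ⟨w, Or.inl hw, hv⟩
      · obtain ⟨w, hw, hv⟩ := Formula.mem_freeC_substC h; exact ⟨w, Or.inr hw, hv⟩
  | .exT x φ, σ, v, h => Formula.mem_freeC_substC (φ := φ) h
  | .exC z φ, σ, v, h => by
      simp only [Formula.substC, Formula.freeC, List.mem_filter] at h ⊢
      obtain ⟨h1, h2⟩ := h
      obtain ⟨w, hw, hv⟩ := Formula.mem_freeC_substC h1
      by_cases hwz : w = z
      · subst hwz; simp [Function.update] at hv; simp [← hv] at h2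
      · refine ⟨w, ⟨hw, by simp [hwz]⟩, ?_⟩
        simpa [Function.update, hwz] using hv

theorem Formula.freeC_substT : ∀ {φ : Formula P N Ω Ξ} {σ : ℕ → ℕ},
    (φ.substT σ).freeC = φ.freeC
  | .tru, _ => rfl
  | .teq x y, _ => rfl
  | .place p x, _ => rfl
  | .rel r n f, σ => by
      simp only [Formula.substT, Formula.freeC]
      have : ∀ i : Fin n, ((f i).substT σ).cvars = (f i).cvars := fun i => Term.cvars_substT
      simp only [this]
  | .not φ, σ => Formula.freeC_substT (φ := φ)
  | .or φ ψ, σ => by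
      simp only [Formula.substT, Formula.freeC]
      rw [Formula.freeC_substT, Formula.freeC_substT]
  | .exT x φ, σ => Formula.freeC_substT (φ := φ)
  | .exC z φ, σ => by
      simp only [Formula.substT, Formula.freeC]
      rw [Formula.freeC_substT]

theorem Formula.freeT_substC : ∀ {φ : Formula P N Ω Ξ} {σ : ℕ → ℕ},
    (φ.substC σ).freeT = φ.freeT
  | .tru, _ => rfl
  | .teq x y, _ => rfl
  | .place p x, _ => rfl
  | .rel r n f, σ => by
      simp only [Formula.substC, Formula.freeT]
      have : ∀ i : Fin n, ((f i).substC σ).tvars = (f i).tvars := fun i => Term.tvars_substC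
      simp only [this]
  | .not φ, σ => Formula.freeT_substC (φ := φ)
  | .or φ ψ, σ => by
      simp only [Formula.substC, Formula.freeT]
      rw [Formula.freeT_substC, Formula.freeT_substC]
  | .exT x φ, σ => by
      simp only [Formula.substC, Formula.freeT]
      rw [Formula.freeT_substC]
  | .exC z φ, σ => Formula.freeT_substC (φ := φ)

theorem Formula.fsize_substT : ∀ {φ : Formula P N Ω Ξ} {σ : ℕ → ℕ},
    (φ.substT σ).fsize = φ.fsize
  | .tru, _ => rfl
  | .teq x y, _ => rfl
  | .place p x, _ => rfl
  | .rel r n f, σ => rfl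
  | .not φ, σ => by simp only [Formula.substT, Formula.fsize]; rw [Formula.fsize_substT]
  | .or φ ψ, σ => by
      simp only [Formula.substT, Formula.fsize]
      rw [Formula.fsize_substT, Formula.fsize_substT]
  | .exT x φ, σ => by simp only [Formula.substT, Formula.fsize]; rw [Formula.fsize_substT]
  | .exC z φ, σ => by simp only [Formula.substT, Formula.fsize]; rw [Formula.fsize_substT]

theorem Formula.fsize_substC : ∀ {φ : Formula P N Ω Ξ} {σ : ℕ → ℕ},
    (φ.substC σ).fsize = φ.fsize
  | .tru, _ => rfl
  | .teq x y, _ => rfl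
  | .place p x, _ => rfl
  | .rel r n f, σ => rfl
  | .not φ, σ => by simp only [Formula.substC, Formula.fsize]; rw [Formula.fsize_substC]
  | .or φ ψ, σ => by
      simp only [Formula.substC, Formula.fsize]
      rw [Formula.fsize_substC, Formula.fsize_substC]
  | .exT x φ, σ => by simp only [Formula.substC, Formula.fsize]; rw [Formula.fsize_substC]
  | .exC z φ, σ => by simp only [Formula.substC, Formula.fsize]; rw [Formula.fsize_substC]

/-! ### fragment preservation -/

theorem IsQF.substT {φ : Formula P N Ω Ξ} (h : IsQF φ) (σ : ℕ → ℕ) : IsQF (φ.substT σ) := by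
  induction h generalizing σ with
  | tru => exact .tru
  | teq => exact .teq
  | place => exact .place
  | rel => exact .rel
  | not _ ih => exact .not (ih σ)
  | or _ _ ih1 ih2 => exact .or (ih1 σ) (ih2 σ)

theorem IsQF.substC {φ : Formula P N Ω Ξ} (h : IsQF φ) (σ : ℕ → ℕ) : IsQF (φ.substC σ) := by
  induction h generalizing σ with
  | tru => exact .tru
  | teq => exact .teq
  | place => exact .place
  | rel => exact .rel
  | not _ ih => exact .not (ih σ)
  | or _ _ ih1 ih2 => exact .or (ih1 σ) (ih2 σ)

theorem InSigma0.substT {φ : Formula P N Ω Ξ} (h : InSigma0 φ) (σ : ℕ → ℕ) :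
    InSigma0 (φ.substT σ) := by
  induction h generalizing σ with
  | of_qf h => exact .of_qf (h.substT σ)
  | exC _ ih => exact .exC (ih σ)
  | allC _ ih => exact .allC (ih σ)

theorem InSigma0.substC {φ : Formula P N Ω Ξ} (h : InSigma0 φ) (σ : ℕ → ℕ) :
    InSigma0 (φ.substC σ) := by
  induction h generalizing σ with
  | of_qf h => exact .of_qf (h.substC σ)
  | exC _ ih => exact .exC (ih _)
  | allC _ ih => exact .allC (ih _)

theorem InPi.one_substT {φ : Formula P N Ω Ξ} (h : InPi 1 φ) (σ : ℕ → ℕ) :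
    InPi 1 (φ.substT σ) := by
  suffices H : ∀ n (φ : Formula P N Ω Ξ), φ.fsize = n → InPi 1 φ → ∀ σ : ℕ → ℕ,
      InPi 1 (φ.substT σ) from H _ φ rfl h σ
  intro n
  induction n using Nat.strong_induction_on with
  | _ n ih =>
  intro φ hn h σ
  cases h with
  | of_sigma hs =>
      cases hs with
      | zero h0 => exact .of_sigma (.zero (h0.substT σ))
  | allT hp =>
      simp only [Formula.substT]
      exact .allT (ih _ (by subst hn; simp only [Formula.fsize]; omega) _ rfl hp _)
  | allC hp =>
      simp only [Formula.substT]
      exact .allC (ih _ (by subst hn; simp only [Formula.fsize]; omega) _ rfl hp _)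

theorem InPi.one_substC {φ : Formula P N Ω Ξ} (h : InPi 1 φ) (σ : ℕ → ℕ) :
    InPi 1 (φ.substC σ) := by
  suffices H : ∀ n (φ : Formula P N Ω Ξ), φ.fsize = n → InPi 1 φ → ∀ σ : ℕ → ℕ,
      InPi 1 (φ.substC σ) from H _ φ rfl h σ
  intro n
  induction n using Nat.strong_induction_on with
  | _ n ih =>
  intro φ hn h σ
  cases h with
  | of_sigma hs =>
      cases hs with
      | zero h0 => exact .of_sigma (.zero (h0.substC σ))
  | allT hp =>
      simp only [Formula.substC]
      exact .allT (ih _ (by subst hn; simp only [Formula.fsize]; omega) _ rfl hp _)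
  | allC hp =>
      simp only [Formula.substC]
      exact .allC (ih _ (by subst hn; simp only [Formula.fsize]; omega) _ rfl hp _)

theorem InSigma.one_substT {φ : Formula P N Ω Ξ} (h : InSigma 1 φ) (σ : ℕ → ℕ) :
    InSigma 1 (φ.substT σ) := by
  suffices H : ∀ n (φ : Formula P N Ω Ξ), φ.fsize = n → InSigma 1 φ → ∀ σ : ℕ → ℕ,
      InSigma 1 (φ.substT σ) from H _ φ rfl h σ
  intro n
  induction n using Nat.strong_induction_on with
  | _ n ih =>
  intro φ hn h σ
  cases h with
  | of_pi hs =>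
      cases hs with
      | zero h0 => exact .of_pi (.zero (h0.substT σ))
  | exT hp =>
      simp only [Formula.substT]
      exact .exT (ih _ (by subst hn; simp only [Formula.fsize]; omega) _ rfl hp _)
  | exC hp =>
      simp only [Formula.substT]
      exact .exC (ih _ (by subst hn; simp only [Formula.fsize]; omega) _ rfl hp _)

theorem InSigma.one_substC {φ : Formula P N Ω Ξ} (h : InSigma 1 φ) (σ : ℕ → ℕ) :
    InSigma 1 (φ.substC σ) := by
  suffices H : ∀ n (φ : Formula P N Ω Ξ), φ.fsize = n → InSigma 1 φ → ∀ σ : ℕ → ℕ,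
      InSigma 1 (φ.substC σ) from H _ φ rfl h σ
  intro n
  induction n using Nat.strong_induction_on with
  | _ n ih =>
  intro φ hn h σ
  cases h with
  | of_pi hs =>
      cases hs with
      | zero h0 => exact .of_pi (.zero (h0.substC σ))
  | exT hp =>
      simp only [Formula.substC]
      exact .exT (ih _ (by subst hn; simp only [Formula.fsize]; omega) _ rfl hp _)
  | exC hp =>
      simp only [Formula.substC]
      exact .exC (ih _ (by subst hn; simp only [Formula.fsize]; omega) _ rfl hp _)

end CML


namespace CML

variable {P : Type} {N : ℕ} {Ω : Type} {Ξ : Type} {C : Type}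
variable {I : Interp C Ω Ξ} {M : Marking P N C}

theorem Formula.sat_and {φ ψ : Formula P N Ω Ξ} {θ : ℕ → ℕ} {ν : ℕ → C} :
    (φ.and ψ).Sat I M θ ν ↔ φ.Sat I M θ ν ∧ ψ.Sat I M θ ν := by
  simp only [Formula.and, Formula.Sat]; tauto

/-! ### renaming a quantified variable -/

theorem Formula.sat_rename_exC {φ : Formula P N Ω Ξ} {z z' : ℕ}
    (hb : z' ∉ φ.boundC) (hf : ∀ w ∈ φ.freeC, w ≠ z → z' ≠ w)
    {θ : ℕ → ℕ} {ν : ℕ → C} {a : C} :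
    (φ.substC (Function.update id z z')).Sat I M θ (Function.update ν z' a) ↔
      φ.Sat I M θ (Function.update ν z a) := by
  rw [Formula.sat_substC ?hcond]
  case hcond =>
    intro w' hw' v hv hu
    by_cases hvz : v = z
    · subst hvz
      simp only [Function.update_self] at hu
      subst hu; exact absurd hw' hb
    · simpa [Function.update_of_ne hvz] using hu
  refine Formula.sat_congr (fun _ _ => rfl) (fun w hw => ?_)
  by_cases hwz : w = z
  · subst hwz
    rw [Function.update_self, Function.update_self, Function.update_self]
  · have h1 : z' ≠ w := hf w hw hwz
    rw [Function.update_of_ne hwz, Function.update_of_ne hwz, id_eq,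
      Function.update_of_ne (Ne.symm h1)]

theorem Formula.sat_rename_exT {φ : Formula P N Ω Ξ} {y y' : ℕ}
    (hb : y' ∉ φ.boundT) (hf : ∀ w ∈ φ.freeT, w ≠ y → y' ≠ w)
    {θ : ℕ → ℕ} {ν : ℕ → C} {t : ℕ} :
    (φ.substT (Function.update id y y')).Sat I M (Function.update θ y' t) ν ↔
      φ.Sat I M (Function.update θ y t) ν := by
  rw [Formula.sat_substT ?hcond]
  case hcond =>
    intro w' hw' v hv hu
    by_cases hvy : v = y
    · subst hvy
      simp only [Function.update_self] at hu
      subst hu; exact absurd hw' hb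
    · simpa [Function.update_of_ne hvy] using hu
  refine Formula.sat_congr (fun w hw => ?_) (fun _ _ => rfl)
  by_cases hwy : w = y
  · subst hwy
    rw [Function.update_self, Function.update_self, Function.update_self]
  · have h1 : y' ≠ w := hf w hw hwy
    rw [Function.update_of_ne hwy, Function.update_of_ne hwy, id_eq,
      Function.update_of_ne (Ne.symm h1)]

/-! ### pulling quantifiers over disjunctions -/

theorem equiv_or_exC_left [Nonempty C] {φ ψ : Formula P N Ω Ξ} {z z' : ℕ}
    (hb : z' ∉ φ.boundC) (hf : ∀ w ∈ φ.freeC, w ≠ z → z' ≠ w) (hψ : z' ∉ ψ.freeC) :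
    Equivalent I (.exC z' (.or (φ.substC (Function.update id z z')) ψ))
      (.or (.exC z φ) ψ) := by
  intro M θ ν
  simp only [Formula.Sat]
  have h1 : ∀ a : C,
      ((φ.substC (Function.update id z z')).Sat I M θ (Function.update ν z' a) ∨
        ψ.Sat I M θ (Function.update ν z' a)) ↔
      (φ.Sat I M θ (Function.update ν z a) ∨ ψ.Sat I M θ ν) := fun a =>
    or_congr (Formula.sat_rename_exC hb hf)
      (Formula.sat_congr (fun _ _ => rfl)
        (fun w hw => Function.update_of_ne (by rintro rfl; exact hψ hw) _ _))
  simp only [h1]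
  rw [exists_or]
  simp

theorem equiv_or_exC_right [Nonempty C] {φ ψ : Formula P N Ω Ξ} {z z' : ℕ}
    (hb : z' ∉ ψ.boundC) (hf : ∀ w ∈ ψ.freeC, w ≠ z → z' ≠ w) (hφ : z' ∉ φ.freeC) :
    Equivalent I (.exC z' (.or φ (ψ.substC (Function.update id z z'))))
      (.or φ (.exC z ψ)) := by
  intro M θ ν
  simp only [Formula.Sat]
  have h1 : ∀ a : C,
      (φ.Sat I M θ (Function.update ν z' a) ∨
        (ψ.substC (Function.update id z z')).Sat I M θ (Function.update ν z' a)) ↔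
      (φ.Sat I M θ ν ∨ ψ.Sat I M θ (Function.update ν z a)) := fun a =>
    or_congr (Formula.sat_congr (fun _ _ => rfl)
        (fun w hw => Function.update_of_ne (by rintro rfl; exact hφ hw) _ _))
      (Formula.sat_rename_exC hb hf)
  simp only [h1]
  rw [exists_or]
  simp

theorem equiv_or_allC_left [Nonempty C] {φ ψ : Formula P N Ω Ξ} {z z' : ℕ}
    (hb : z' ∉ φ.boundC) (hf : ∀ w ∈ φ.freeC, w ≠ z → z' ≠ w) (hψ : z' ∉ ψ.freeC) :
    Equivalent I (.not (.exC z' (.not (.or (φ.substC (Function.update id z z')) ψ))))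
      (.or (.not (.exC z (.not φ))) ψ) := by
  intro M θ ν
  simp only [Formula.Sat, not_exists, not_not]
  have h1 : ∀ a : C,
      ((φ.substC (Function.update id z z')).Sat I M θ (Function.update ν z' a) ∨
        ψ.Sat I M θ (Function.update ν z' a)) ↔
      (φ.Sat I M θ (Function.update ν z a) ∨ ψ.Sat I M θ ν) := fun a =>
    or_congr (Formula.sat_rename_exC hb hf)
      (Formula.sat_congr (fun _ _ => rfl)
        (fun w hw => Function.update_of_ne (by rintro rfl; exact hψ hw) _ _))
  simp only [h1]
  constructor
  · intro h
    by_cases hq : ψ.Sat I M θ ν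
    · exact Or.inr hq
    · exact Or.inl fun a => (h a).resolve_right hq
  · rintro (h | h) a
    · exact Or.inl (h a)
    · exact Or.inr h

theorem equiv_or_allC_right [Nonempty C] {φ ψ : Formula P N Ω Ξ} {z z' : ℕ}
    (hb : z' ∉ ψ.boundC) (hf : ∀ w ∈ ψ.freeC, w ≠ z → z' ≠ w) (hφ : z' ∉ φ.freeC) :
    Equivalent I (.not (.exC z' (.not (.or φ (ψ.substC (Function.update id z z'))))))
      (.or φ (.not (.exC z (.not ψ)))) := by
  intro M θ ν
  simp only [Formula.Sat, not_exists, not_not]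
  have h1 : ∀ a : C,
      (φ.Sat I M θ (Function.update ν z' a) ∨
        (ψ.substC (Function.update id z z')).Sat I M θ (Function.update ν z' a)) ↔
      (φ.Sat I M θ ν ∨ ψ.Sat I M θ (Function.update ν z a)) := fun a =>
    or_congr (Formula.sat_congr (fun _ _ => rfl)
        (fun w hw => Function.update_of_ne (by rintro rfl; exact hφ hw) _ _))
      (Formula.sat_rename_exC hb hf)
  simp only [h1]
  constructor
  · intro h
    by_cases hq : φ.Sat I M θ ν
    · exact Or.inl hq
    · exact Or.inr fun a => (h a).resolve_left hq
  · rintro (h | h) a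
    · exact Or.inl h
    · exact Or.inr (h a)

theorem equiv_or_exT_left {φ ψ : Formula P N Ω Ξ} {y y' : ℕ}
    (hb : y' ∉ φ.boundT) (hf : ∀ w ∈ φ.freeT, w ≠ y → y' ≠ w) (hψ : y' ∉ ψ.freeT) :
    Equivalent I (.exT y' (.or (φ.substT (Function.update id y y')) ψ))
      (.or (.exT y φ) ψ) := by
  intro M θ ν
  simp only [Formula.Sat]
  have h1 : ∀ t : ℕ,
      ((φ.substT (Function.update id y y')).Sat I M (Function.update θ y' t) ν ∨
        ψ.Sat I M (Function.update θ y' t) ν) ↔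
      (φ.Sat I M (Function.update θ y t) ν ∨ ψ.Sat I M θ ν) := fun t =>
    or_congr (Formula.sat_rename_exT hb hf)
      (Formula.sat_congr
        (fun w hw => Function.update_of_ne (by rintro rfl; exact hψ hw) _ _) (fun _ _ => rfl))
  simp only [h1]
  rw [exists_or]
  simp

theorem equiv_or_exT_right {φ ψ : Formula P N Ω Ξ} {y y' : ℕ}
    (hb : y' ∉ ψ.boundT) (hf : ∀ w ∈ ψ.freeT, w ≠ y → y' ≠ w) (hφ : y' ∉ φ.freeT) :
    Equivalent I (.exT y' (.or φ (ψ.substT (Function.update id y y'))))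
      (.or φ (.exT y ψ)) := by
  intro M θ ν
  simp only [Formula.Sat]
  have h1 : ∀ t : ℕ,
      (φ.Sat I M (Function.update θ y' t) ν ∨
        (ψ.substT (Function.update id y y')).Sat I M (Function.update θ y' t) ν) ↔
      (φ.Sat I M θ ν ∨ ψ.Sat I M (Function.update θ y t) ν) := fun t =>
    or_congr (Formula.sat_congr
        (fun w hw => Function.update_of_ne (by rintro rfl; exact hφ hw) _ _) (fun _ _ => rfl))
      (Formula.sat_rename_exT hb hf)
  simp only [h1]
  rw [exists_or]
  simp

theorem equiv_or_allT_left {φ ψ : Formula P N Ω Ξ} {y y' : ℕ}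
    (hb : y' ∉ φ.boundT) (hf : ∀ w ∈ φ.freeT, w ≠ y → y' ≠ w) (hψ : y' ∉ ψ.freeT) :
    Equivalent I (.not (.exT y' (.not (.or (φ.substT (Function.update id y y')) ψ))))
      (.or (.not (.exT y (.not φ))) ψ) := by
  intro M θ ν
  simp only [Formula.Sat, not_exists, not_not]
  have h1 : ∀ t : ℕ,
      ((φ.substT (Function.update id y y')).Sat I M (Function.update θ y' t) ν ∨
        ψ.Sat I M (Function.update θ y' t) ν) ↔
      (φ.Sat I M (Function.update θ y t) ν ∨ ψ.Sat I M θ ν) := fun t =>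
    or_congr (Formula.sat_rename_exT hb hf)
      (Formula.sat_congr
        (fun w hw => Function.update_of_ne (by rintro rfl; exact hψ hw) _ _) (fun _ _ => rfl))
  simp only [h1]
  constructor
  · intro h
    by_cases hq : ψ.Sat I M θ ν
    · exact Or.inr hq
    · exact Or.inl fun t => (h t).resolve_right hq
  · rintro (h | h) t
    · exact Or.inl (h t)
    · exact Or.inr h

theorem equiv_or_allT_right {φ ψ : Formula P N Ω Ξ} {y y' : ℕ}
    (hb : y' ∉ ψ.boundT) (hf : ∀ w ∈ ψ.freeT, w ≠ y → y' ≠ w) (hφ : y' ∉ φ.freeT) :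
    Equivalent I (.not (.exT y' (.not (.or φ (ψ.substT (Function.update id y y'))))))
      (.or φ (.not (.exT y (.not ψ)))) := by
  intro M θ ν
  simp only [Formula.Sat, not_exists, not_not]
  have h1 : ∀ t : ℕ,
      (φ.Sat I M (Function.update θ y' t) ν ∨
        (ψ.substT (Function.update id y y')).Sat I M (Function.update θ y' t) ν) ↔
      (φ.Sat I M θ ν ∨ ψ.Sat I M (Function.update θ y t) ν) := fun t =>
    or_congr (Formula.sat_congr
        (fun w hw => Function.update_of_ne (by rintro rfl; exact hφ hw) _ _) (fun _ _ => rfl))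
      (Formula.sat_rename_exT hb hf)
  simp only [h1]
  constructor
  · intro h
    by_cases hq : φ.Sat I M θ ν
    · exact Or.inl hq
    · exact Or.inr fun t => (h t).resolve_left hq
  · rintro (h | h) t
    · exact Or.inl h
    · exact Or.inr (h t)

end CML


namespace CML

variable {P : Type} {N : ℕ} {Ω : Type} {Ξ : Type} {C : Type}
variable (I : Interp C Ω Ξ)

/-! ### negation closure -/

theorem InSigma0.neg_closure {φ : Formula P N Ω Ξ} (h : InSigma0 φ) :
    ∃ ξ, InSigma0 ξ ∧ ∀ (M : Marking P N C) θ ν, (ξ.Sat I M θ ν ↔ ¬ φ.Sat I M θ ν) := by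
  induction h with
  | of_qf hq => exact ⟨_, .of_qf (.not hq), fun M θ ν => Iff.rfl⟩
  | @exC z φ _ ih =>
      obtain ⟨ξ, hξ, hs⟩ := ih
      exact ⟨.not (.exC z (.not ξ)), .allC hξ, fun M θ ν => by simp [Formula.Sat, hs]⟩
  | @allC z φ _ ih =>
      obtain ⟨ξ, hξ, hs⟩ := ih
      exact ⟨.exC z ξ, .exC hξ, fun M θ ν => by simp [Formula.Sat, hs]⟩

theorem InSigma.one_neg_closure {φ : Formula P N Ω Ξ} (h : InSigma 1 φ) :
    ∃ ξ, InPi 1 ξ ∧ ∀ (M : Marking P N C) θ ν, (ξ.Sat I M θ ν ↔ ¬ φ.Sat I M θ ν) := by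
  suffices H : ∀ n (φ : Formula P N Ω Ξ), φ.fsize = n → InSigma 1 φ →
      ∃ ξ, InPi 1 ξ ∧ ∀ (M : Marking P N C) θ ν, (ξ.Sat I M θ ν ↔ ¬ φ.Sat I M θ ν) from
    H _ φ rfl h
  intro n
  induction n using Nat.strong_induction_on with
  | _ n ih =>
  rintro φ hn h
  cases h with
  | of_pi hs =>
      cases hs with
      | zero h0 =>
          obtain ⟨ξ, hξ, hs⟩ := h0.neg_closure I
          exact ⟨ξ, .of_sigma (.zero hξ), hs⟩
  | @exT _ y φ₀ hp =>
      obtain ⟨ξ, hξ, hs⟩ := ih φ₀.fsize (by subst hn; simp only [Formula.fsize]; omega) _ rfl hp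
      exact ⟨.not (.exT y (.not ξ)), .allT hξ, fun M θ ν => by simp [Formula.Sat, hs]⟩
  | @exC _ z φ₀ hp =>
      obtain ⟨ξ, hξ, hs⟩ := ih φ₀.fsize (by subst hn; simp only [Formula.fsize]; omega) _ rfl hp
      exact ⟨.not (.exC z (.not ξ)), .allC hξ, fun M θ ν => by simp [Formula.Sat, hs]⟩

theorem InPi.one_neg_closure {φ : Formula P N Ω Ξ} (h : InPi 1 φ) :
    ∃ ξ, InSigma 1 ξ ∧ ∀ (M : Marking P N C) θ ν, (ξ.Sat I M θ ν ↔ ¬ φ.Sat I M θ ν) := by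
  suffices H : ∀ n (φ : Formula P N Ω Ξ), φ.fsize = n → InPi 1 φ →
      ∃ ξ, InSigma 1 ξ ∧ ∀ (M : Marking P N C) θ ν, (ξ.Sat I M θ ν ↔ ¬ φ.Sat I M θ ν) from
    H _ φ rfl h
  intro n
  induction n using Nat.strong_induction_on with
  | _ n ih =>
  rintro φ hn h
  cases h with
  | of_sigma hs =>
      cases hs with
      | zero h0 =>
          obtain ⟨ξ, hξ, hs⟩ := h0.neg_closure I
          exact ⟨ξ, .of_pi (.zero hξ), hs⟩
  | @allT _ y φ₀ hp =>
      obtain ⟨ξ, hξ, hs⟩ := ih φ₀.fsize (by subst hn; simp only [Formula.fsize]; omega) _ rfl hp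
      exact ⟨.exT y ξ, .exT hξ, fun M θ ν => by simp [Formula.Sat, hs]⟩
  | @allC _ z φ₀ hp =>
      obtain ⟨ξ, hξ, hs⟩ := ih φ₀.fsize (by subst hn; simp only [Formula.fsize]; omega) _ rfl hp
      exact ⟨.exC z ξ, .exC hξ, fun M θ ν => by simp [Formula.Sat, hs]⟩

end CML


namespace CML

variable {P : Type} {N : ℕ} {Ω : Type} {Ξ : Type} {C : Type}
variable (I : Interp C Ω Ξ)

theorem InSigma0.or_closure [Nonempty C] {φ ψ : Formula P N Ω Ξ}
    (hφ : InSigma0 φ) (hψ : InSigma0 ψ) :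
    ∃ ξ, InSigma0 ξ ∧ ∀ (M : Marking P N C) θ ν,
      (ξ.Sat I M θ ν ↔ (φ.Sat I M θ ν ∨ ψ.Sat I M θ ν)) := by
  suffices H : ∀ n (φ ψ : Formula P N Ω Ξ), φ.fsize + ψ.fsize = n → InSigma0 φ → InSigma0 ψ →
      ∃ ξ, InSigma0 ξ ∧ ∀ (M : Marking P N C) θ ν,
        (ξ.Sat I M θ ν ↔ (φ.Sat I M θ ν ∨ ψ.Sat I M θ ν)) from H _ φ ψ rfl hφ hψ
  intro n
  induction n using Nat.strong_induction_on with
  | _ n ih =>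
  rintro φ ψ hn hφ hψ
  cases hφ with
  | @exC z φ₀ h0 =>
      set z' := max φ₀.cvarBound ψ.cvarBound with hz'
      have hb : z' ∉ φ₀.boundC := fun h => by
        have := Formula.boundC_lt_cvarBound h; omega
      have hf : ∀ w ∈ φ₀.freeC, w ≠ z → z' ≠ w := fun w hw _ => by
        have := Formula.freeC_lt_cvarBound hw; omega
      have hfψ : z' ∉ ψ.freeC := fun h => by
        have := Formula.freeC_lt_cvarBound h; omega
      obtain ⟨ξ, hξ, hs⟩ := ih ((φ₀.substC (Function.update id z z')).fsize + ψ.fsize)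
        (by rw [Formula.fsize_substC]; subst hn; simp only [Formula.fsize]; omega)
        _ _ rfl (h0.substC _) hψ
      refine ⟨.exC z' ξ, .exC hξ, fun M θ ν => ?_⟩
      have h2 := equiv_or_exC_left (I := I) hb hf hfψ M θ ν
      simp only [Formula.Sat] at h2 ⊢
      simp only [hs]
      exact h2
  | @allC z φ₀ h0 =>
      set z' := max φ₀.cvarBound ψ.cvarBound with hz'
      have hb : z' ∉ φ₀.boundC := fun h => by
        have := Formula.boundC_lt_cvarBound h; omega
      have hf : ∀ w ∈ φ₀.freeC, w ≠ z → z' ≠ w := fun w hw _ => by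
        have := Formula.freeC_lt_cvarBound hw; omega
      have hfψ : z' ∉ ψ.freeC := fun h => by
        have := Formula.freeC_lt_cvarBound h; omega
      obtain ⟨ξ, hξ, hs⟩ := ih ((φ₀.substC (Function.update id z z')).fsize + ψ.fsize)
        (by rw [Formula.fsize_substC]; subst hn; simp only [Formula.fsize]; omega)
        _ _ rfl (h0.substC _) hψ
      refine ⟨.not (.exC z' (.not ξ)), .allC hξ, fun M θ ν => ?_⟩
      have h2 := equiv_or_allC_left (I := I) hb hf hfψ M θ ν
      simp only [Formula.Sat] at h2 ⊢
      simp only [hs]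
      exact h2
  | of_qf hq =>
      cases hψ with
      | of_qf hq2 => exact ⟨.or φ ψ, .of_qf (.or hq hq2), fun M θ ν => Iff.rfl⟩
      | @exC z ψ₀ h0 =>
          set z' := max ψ₀.cvarBound φ.cvarBound with hz'
          have hb : z' ∉ ψ₀.boundC := fun h => by
            have := Formula.boundC_lt_cvarBound h; omega
          have hf : ∀ w ∈ ψ₀.freeC, w ≠ z → z' ≠ w := fun w hw _ => by
            have := Formula.freeC_lt_cvarBound hw; omega
          have hfφ : z' ∉ φ.freeC := fun h => by
            have := Formula.freeC_lt_cvarBound h; omega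
          obtain ⟨ξ, hξ, hs⟩ := ih (φ.fsize + (ψ₀.substC (Function.update id z z')).fsize)
            (by rw [Formula.fsize_substC]; subst hn; simp only [Formula.fsize]; omega)
            _ _ rfl (.of_qf hq) (h0.substC _)
          refine ⟨.exC z' ξ, .exC hξ, fun M θ ν => ?_⟩
          have h2 := equiv_or_exC_right (I := I) hb hf hfφ M θ ν
          simp only [Formula.Sat] at h2 ⊢
          simp only [hs]
          exact h2
      | @allC z ψ₀ h0 =>
          set z' := max ψ₀.cvarBound φ.cvarBound with hz'
          have hb : z' ∉ ψ₀.boundC := fun h => by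
            have := Formula.boundC_lt_cvarBound h; omega
          have hf : ∀ w ∈ ψ₀.freeC, w ≠ z → z' ≠ w := fun w hw _ => by
            have := Formula.freeC_lt_cvarBound hw; omega
          have hfφ : z' ∉ φ.freeC := fun h => by
            have := Formula.freeC_lt_cvarBound h; omega
          obtain ⟨ξ, hξ, hs⟩ := ih (φ.fsize + (ψ₀.substC (Function.update id z z')).fsize)
            (by rw [Formula.fsize_substC]; subst hn; simp only [Formula.fsize]; omega)
            _ _ rfl (.of_qf hq) (h0.substC _)
          refine ⟨.not (.exC z' (.not ξ)), .allC hξ, fun M θ ν => ?_⟩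
          have h2 := equiv_or_allC_right (I := I) hb hf hfφ M θ ν
          simp only [Formula.Sat] at h2 ⊢
          simp only [hs]
          exact h2

theorem InPi.one_or_closure [Nonempty C] {φ ψ : Formula P N Ω Ξ}
    (hφ : InPi 1 φ) (hψ : InPi 1 ψ) :
    ∃ ξ, InPi 1 ξ ∧ ∀ (M : Marking P N C) θ ν,
      (ξ.Sat I M θ ν ↔ (φ.Sat I M θ ν ∨ ψ.Sat I M θ ν)) := by
  suffices H : ∀ n (φ ψ : Formula P N Ω Ξ), φ.fsize + ψ.fsize = n → InPi 1 φ → InPi 1 ψ →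
      ∃ ξ, InPi 1 ξ ∧ ∀ (M : Marking P N C) θ ν,
        (ξ.Sat I M θ ν ↔ (φ.Sat I M θ ν ∨ ψ.Sat I M θ ν)) from H _ φ ψ rfl hφ hψ
  intro n
  induction n using Nat.strong_induction_on with
  | _ n ih =>
  rintro φ ψ hn hφ hψ
  cases hφ with
  | @allT _ y φ₀ h0 =>
      set y' := max φ₀.tvarSup ψ.tvarSup with hy'
      have hb : y' ∉ φ₀.boundT := fun h => by
        have := Formula.boundT_lt_tvarSup h; omega
      have hf : ∀ w ∈ φ₀.freeT, w ≠ y → y' ≠ w := fun w hw _ => by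
        have := Formula.freeT_lt_tvarSup hw; omega
      have hfψ : y' ∉ ψ.freeT := fun h => by
        have := Formula.freeT_lt_tvarSup h; omega
      obtain ⟨ξ, hξ, hs⟩ := ih ((φ₀.substT (Function.update id y y')).fsize + ψ.fsize)
        (by rw [Formula.fsize_substT]; subst hn; simp only [Formula.fsize]; omega)
        _ _ rfl (h0.one_substT _) hψ
      refine ⟨.not (.exT y' (.not ξ)), .allT hξ, fun M θ ν => ?_⟩
      have h2 := equiv_or_allT_left (I := I) hb hf hfψ M θ ν
      simp only [Formula.Sat] at h2 ⊢
      simp only [hs]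
      exact h2
  | @allC _ z φ₀ h0 =>
      set z' := max φ₀.cvarBound ψ.cvarBound with hz'
      have hb : z' ∉ φ₀.boundC := fun h => by
        have := Formula.boundC_lt_cvarBound h; omega
      have hf : ∀ w ∈ φ₀.freeC, w ≠ z → z' ≠ w := fun w hw _ => by
        have := Formula.freeC_lt_cvarBound hw; omega
      have hfψ : z' ∉ ψ.freeC := fun h => by
        have := Formula.freeC_lt_cvarBound h; omega
      obtain ⟨ξ, hξ, hs⟩ := ih ((φ₀.substC (Function.update id z z')).fsize + ψ.fsize)
        (by rw [Formula.fsize_substC]; subst hn; simp only [Formula.fsize]; omega)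
        _ _ rfl (h0.one_substC _) hψ
      refine ⟨.not (.exC z' (.not ξ)), .allC hξ, fun M θ ν => ?_⟩
      have h2 := equiv_or_allC_left (I := I) hb hf hfψ M θ ν
      simp only [Formula.Sat] at h2 ⊢
      simp only [hs]
      exact h2
  | of_sigma hs0 =>
      cases hs0 with
      | zero h0 =>
      cases hψ with
      | of_sigma hs1 =>
          cases hs1 with
          | zero h1 =>
              obtain ⟨ξ, hξ, hs⟩ := InSigma0.or_closure I h0 h1
              exact ⟨ξ, .of_sigma (.zero hξ), hs⟩
      | @allT _ y ψ₀ h1 =>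
          set y' := max ψ₀.tvarSup φ.tvarSup with hy'
          have hb : y' ∉ ψ₀.boundT := fun h => by
            have := Formula.boundT_lt_tvarSup h; omega
          have hf : ∀ w ∈ ψ₀.freeT, w ≠ y → y' ≠ w := fun w hw _ => by
            have := Formula.freeT_lt_tvarSup hw; omega
          have hfφ : y' ∉ φ.freeT := fun h => by
            have := Formula.freeT_lt_tvarSup h; omega
          obtain ⟨ξ, hξ, hs⟩ := ih (φ.fsize + (ψ₀.substT (Function.update id y y')).fsize)
            (by rw [Formula.fsize_substT]; subst hn; simp only [Formula.fsize]; omega)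
            _ _ rfl (.of_sigma (.zero h0)) (h1.one_substT _)
          refine ⟨.not (.exT y' (.not ξ)), .allT hξ, fun M θ ν => ?_⟩
          have h2 := equiv_or_allT_right (I := I) hb hf hfφ M θ ν
          simp only [Formula.Sat] at h2 ⊢
          simp only [hs]
          exact h2
      | @allC _ z ψ₀ h1 =>
          set z' := max ψ₀.cvarBound φ.cvarBound with hz'
          have hb : z' ∉ ψ₀.boundC := fun h => by
            have := Formula.boundC_lt_cvarBound h; omega
          have hf : ∀ w ∈ ψ₀.freeC, w ≠ z → z' ≠ w := fun w hw _ => by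
            have := Formula.freeC_lt_cvarBound hw; omega
          have hfφ : z' ∉ φ.freeC := fun h => by
            have := Formula.freeC_lt_cvarBound h; omega
          obtain ⟨ξ, hξ, hs⟩ := ih (φ.fsize + (ψ₀.substC (Function.update id z z')).fsize)
            (by rw [Formula.fsize_substC]; subst hn; simp only [Formula.fsize]; omega)
            _ _ rfl (.of_sigma (.zero h0)) (h1.one_substC _)
          refine ⟨.not (.exC z' (.not ξ)), .allC hξ, fun M θ ν => ?_⟩
          have h2 := equiv_or_allC_right (I := I) hb hf hfφ M θ ν
          simp only [Formula.Sat] at h2 ⊢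
          simp only [hs]
          exact h2

theorem InSigma.one_or_closure [Nonempty C] {φ ψ : Formula P N Ω Ξ}
    (hφ : InSigma 1 φ) (hψ : InSigma 1 ψ) :
    ∃ ξ, InSigma 1 ξ ∧ ∀ (M : Marking P N C) θ ν,
      (ξ.Sat I M θ ν ↔ (φ.Sat I M θ ν ∨ ψ.Sat I M θ ν)) := by
  suffices H : ∀ n (φ ψ : Formula P N Ω Ξ), φ.fsize + ψ.fsize = n → InSigma 1 φ → InSigma 1 ψ →
      ∃ ξ, InSigma 1 ξ ∧ ∀ (M : Marking P N C) θ ν,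
        (ξ.Sat I M θ ν ↔ (φ.Sat I M θ ν ∨ ψ.Sat I M θ ν)) from H _ φ ψ rfl hφ hψ
  intro n
  induction n using Nat.strong_induction_on with
  | _ n ih =>
  rintro φ ψ hn hφ hψ
  cases hφ with
  | @exT _ y φ₀ h0 =>
      set y' := max φ₀.tvarSup ψ.tvarSup with hy'
      have hb : y' ∉ φ₀.boundT := fun h => by
        have := Formula.boundT_lt_tvarSup h; omega
      have hf : ∀ w ∈ φ₀.freeT, w ≠ y → y' ≠ w := fun w hw _ => by
        have := Formula.freeT_lt_tvarSup hw; omega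
      have hfψ : y' ∉ ψ.freeT := fun h => by
        have := Formula.freeT_lt_tvarSup h; omega
      obtain ⟨ξ, hξ, hs⟩ := ih ((φ₀.substT (Function.update id y y')).fsize + ψ.fsize)
        (by rw [Formula.fsize_substT]; subst hn; simp only [Formula.fsize]; omega)
        _ _ rfl (h0.one_substT _) hψ
      refine ⟨.exT y' ξ, .exT hξ, fun M θ ν => ?_⟩
      have h2 := equiv_or_exT_left (I := I) hb hf hfψ M θ ν
      simp only [Formula.Sat] at h2 ⊢
      simp only [hs]
      exact h2
  | @exC _ z φ₀ h0 =>
      set z' := max φ₀.cvarBound ψ.cvarBound with hz'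
      have hb : z' ∉ φ₀.boundC := fun h => by
        have := Formula.boundC_lt_cvarBound h; omega
      have hf : ∀ w ∈ φ₀.freeC, w ≠ z → z' ≠ w := fun w hw _ => by
        have := Formula.freeC_lt_cvarBound hw; omega
      have hfψ : z' ∉ ψ.freeC := fun h => by
        have := Formula.freeC_lt_cvarBound h; omega
      obtain ⟨ξ, hξ, hs⟩ := ih ((φ₀.substC (Function.update id z z')).fsize + ψ.fsize)
        (by rw [Formula.fsize_substC]; subst hn; simp only [Formula.fsize]; omega)
        _ _ rfl (h0.one_substC _) hψ
      refine ⟨.exC z' ξ, .exC hξ, fun M θ ν => ?_⟩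
      have h2 := equiv_or_exC_left (I := I) hb hf hfψ M θ ν
      simp only [Formula.Sat] at h2 ⊢
      simp only [hs]
      exact h2
  | of_pi hs0 =>
      cases hs0 with
      | zero h0 =>
      cases hψ with
      | of_pi hs1 =>
          cases hs1 with
          | zero h1 =>
              obtain ⟨ξ, hξ, hs⟩ := InSigma0.or_closure I h0 h1
              exact ⟨ξ, .of_pi (.zero hξ), hs⟩
      | @exT _ y ψ₀ h1 =>
          set y' := max ψ₀.tvarSup φ.tvarSup with hy'
          have hb : y' ∉ ψ₀.boundT := fun h => by
            have := Formula.boundT_lt_tvarSup h; omega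
          have hf : ∀ w ∈ ψ₀.freeT, w ≠ y → y' ≠ w := fun w hw _ => by
            have := Formula.freeT_lt_tvarSup hw; omega
          have hfφ : y' ∉ φ.freeT := fun h => by
            have := Formula.freeT_lt_tvarSup h; omega
          obtain ⟨ξ, hξ, hs⟩ := ih (φ.fsize + (ψ₀.substT (Function.update id y y')).fsize)
            (by rw [Formula.fsize_substT]; subst hn; simp only [Formula.fsize]; omega)
            _ _ rfl (.of_pi (.zero h0)) (h1.one_substT _)
          refine ⟨.exT y' ξ, .exT hξ, fun M θ ν => ?_⟩
          have h2 := equiv_or_exT_right (I := I) hb hf hfφ M θ ν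
          simp only [Formula.Sat] at h2 ⊢
          simp only [hs]
          exact h2
      | @exC _ z ψ₀ h1 =>
          set z' := max ψ₀.cvarBound φ.cvarBound with hz'
          have hb : z' ∉ ψ₀.boundC := fun h => by
            have := Formula.boundC_lt_cvarBound h; omega
          have hf : ∀ w ∈ ψ₀.freeC, w ≠ z → z' ≠ w := fun w hw _ => by
            have := Formula.freeC_lt_cvarBound hw; omega
          have hfφ : z' ∉ φ.freeC := fun h => by
            have := Formula.freeC_lt_cvarBound h; omega
          obtain ⟨ξ, hξ, hs⟩ := ih (φ.fsize + (ψ₀.substC (Function.update id z z')).fsize)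
            (by rw [Formula.fsize_substC]; subst hn; simp only [Formula.fsize]; omega)
            _ _ rfl (.of_pi (.zero h0)) (h1.one_substC _)
          refine ⟨.exC z' ξ, .exC hξ, fun M θ ν => ?_⟩
          have h2 := equiv_or_exC_right (I := I) hb hf hfφ M θ ν
          simp only [Formula.Sat] at h2 ⊢
          simp only [hs]
          exact h2

theorem InSigma0.and_closure [Nonempty C] {φ ψ : Formula P N Ω Ξ}
    (hφ : InSigma0 φ) (hψ : InSigma0 ψ) :
    ∃ ξ, InSigma0 ξ ∧ ∀ (M : Marking P N C) θ ν,
      (ξ.Sat I M θ ν ↔ (φ.Sat I M θ ν ∧ ψ.Sat I M θ ν)) := by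
  obtain ⟨nφ, hnφ, sφ⟩ := hφ.neg_closure I
  obtain ⟨nψ, hnψ, sψ⟩ := hψ.neg_closure I
  obtain ⟨d, hd, sd⟩ := InSigma0.or_closure I hnφ hnψ
  obtain ⟨ξ, hξ, sξ⟩ := hd.neg_closure I
  refine ⟨ξ, hξ, fun M θ ν => ?_⟩
  rw [sξ, sd M θ ν, sφ, sψ]
  tauto

theorem InPi.one_and_closure [Nonempty C] {φ ψ : Formula P N Ω Ξ}
    (hφ : InPi 1 φ) (hψ : InPi 1 ψ) :
    ∃ ξ, InPi 1 ξ ∧ ∀ (M : Marking P N C) θ ν,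
      (ξ.Sat I M θ ν ↔ (φ.Sat I M θ ν ∧ ψ.Sat I M θ ν)) := by
  obtain ⟨nφ, hnφ, sφ⟩ := hφ.one_neg_closure I
  obtain ⟨nψ, hnψ, sψ⟩ := hψ.one_neg_closure I
  obtain ⟨d, hd, sd⟩ := InSigma.one_or_closure I hnφ hnψ
  obtain ⟨ξ, hξ, sξ⟩ := hd.one_neg_closure I
  refine ⟨ξ, hξ, fun M θ ν => ?_⟩
  rw [sξ, sd M θ ν, sφ, sψ]
  tauto

theorem pi1_conj_list [Nonempty C] {L : List (Formula P N Ω Ξ)} (h : ∀ f ∈ L, InPi 1 f) :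
    ∃ ξ, InPi 1 ξ ∧ ∀ (M : Marking P N C) θ ν,
      (ξ.Sat I M θ ν ↔ ∀ f ∈ L, f.Sat I M θ ν) := by
  induction L with
  | nil =>
      exact ⟨.tru, .of_sigma (.zero (.of_qf .tru)), fun M θ ν => by
        simp [Formula.Sat]⟩
  | cons a L ihL =>
      obtain ⟨ξL, hξL, hsL⟩ := ihL (fun f hf => h f (by simp [hf]))
      obtain ⟨ξ, hξ, hs⟩ := InPi.one_and_closure I (h a (by simp)) hξL
      refine ⟨ξ, hξ, fun M θ ν => ?_⟩
      rw [hs M θ ν, hsL M θ ν]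
      simp

theorem sigma0_conj_list [Nonempty C] {L : List (Formula P N Ω Ξ)} (h : ∀ f ∈ L, InSigma0 f) :
    ∃ ξ, InSigma0 ξ ∧ ∀ (M : Marking P N C) θ ν,
      (ξ.Sat I M θ ν ↔ ∀ f ∈ L, f.Sat I M θ ν) := by
  induction L with
  | nil =>
      exact ⟨.tru, .of_qf .tru, fun M θ ν => by simp [Formula.Sat]⟩
  | cons a L ihL =>
      obtain ⟨ξL, hξL, hsL⟩ := ihL (fun f hf => h f (by simp [hf]))
      obtain ⟨ξ, hξ, hs⟩ := InSigma0.and_closure I (h a (by simp)) hξL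
      refine ⟨ξ, hξ, fun M θ ν => ?_⟩
      rw [hs M θ ν, hsL M θ ν]
      simp

end CML


namespace CML

variable {P : Type} {N : ℕ} {Ω : Type} {Ξ : Type} {C : Type}
variable (I : Interp C Ω Ξ)

/-- Iterated universal color quantification. -/
def allCs (zs : List ℕ) (φ : Formula P N Ω Ξ) : Formula P N Ω Ξ :=
  zs.foldr (fun z ψ => .not (.exC z (.not ψ))) φ

theorem InPi.one_allTs {φ : Formula P N Ω Ξ} (h : InPi 1 φ) :
    ∀ {L : List ℕ}, InPi 1 (allTs L φ)
  | [] => h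
  | y :: L => .allT (InPi.one_allTs h (L := L))

theorem InPi.one_allCs {φ : Formula P N Ω Ξ} (h : InPi 1 φ) :
    ∀ {L : List ℕ}, InPi 1 (allCs L φ)
  | [] => h
  | y :: L => .allC (InPi.one_allCs h (L := L))

theorem mem_freeT_allTs {φ : Formula P N Ω Ξ} {v : ℕ} :
    ∀ {L : List ℕ}, (v ∈ (allTs L φ).freeT ↔ v ∈ φ.freeT ∧ v ∉ L)
  | [] => by simp [allTs]
  | y :: L => by
      show v ∈ (Formula.not (.exT y (.not (allTs L φ)))).freeT ↔ _
      simp only [Formula.freeT, List.mem_filter, mem_freeT_allTs (L := L), List.mem_cons]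
      constructor
      · rintro ⟨⟨h1, h2⟩, h3⟩
        simp only [bne_iff_ne, ne_eq] at h3
        refine ⟨h1, ?_⟩
        rintro (rfl | hc)
        · exact h3 rfl
        · exact h2 hc
      · rintro ⟨h1, h2⟩
        have hy : v ≠ y := fun hc => h2 (Or.inl hc)
        have hL : v ∉ L := fun hc => h2 (Or.inr hc)
        exact ⟨⟨h1, hL⟩, by simp [hy]⟩

theorem freeC_allTs {φ : Formula P N Ω Ξ} : ∀ {L : List ℕ}, (allTs L φ).freeC = φ.freeC
  | [] => rfl
  | y :: L => by
      show (Formula.not (.exT y (.not (allTs L φ)))).freeC = _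
      simp only [Formula.freeC]
      exact freeC_allTs (L := L)

theorem mem_freeC_allCs {φ : Formula P N Ω Ξ} {v : ℕ} :
    ∀ {L : List ℕ}, (v ∈ (allCs L φ).freeC ↔ v ∈ φ.freeC ∧ v ∉ L)
  | [] => by simp [allCs]
  | y :: L => by
      show v ∈ (Formula.not (.exC y (.not (allCs L φ)))).freeC ↔ _
      simp only [Formula.freeC, List.mem_filter, mem_freeC_allCs (L := L), List.mem_cons]
      constructor
      · rintro ⟨⟨h1, h2⟩, h3⟩
        simp only [bne_iff_ne, ne_eq] at h3
        refine ⟨h1, ?_⟩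
        rintro (rfl | hc)
        · exact h3 rfl
        · exact h2 hc
      · rintro ⟨h1, h2⟩
        have hy : v ≠ y := fun hc => h2 (Or.inl hc)
        have hL : v ∉ L := fun hc => h2 (Or.inr hc)
        exact ⟨⟨h1, hL⟩, by simp [hy]⟩

theorem freeT_allCs {φ : Formula P N Ω Ξ} : ∀ {L : List ℕ}, (allCs L φ).freeT = φ.freeT
  | [] => rfl
  | y :: L => by
      show (Formula.not (.exC y (.not (allCs L φ)))).freeT = _
      simp only [Formula.freeT]
      exact freeT_allCs (L := L)

theorem sat_allTs {φ : Formula P N Ω Ξ} {M : Marking P N C} {ν : ℕ → C} :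
    ∀ {L : List ℕ} {θ : ℕ → ℕ},
      ((allTs L φ).Sat I M θ ν ↔ ∀ θ' : ℕ → ℕ, (∀ v, v ∉ L → θ' v = θ v) → φ.Sat I M θ' ν)
  | [], θ => by
      simp only [allTs, List.foldr]
      constructor
      · intro h θ' hθ'
        have : θ' = θ := funext fun v => hθ' v (by simp)
        rwa [this]
      · intro h
        exact h θ (fun _ _ => rfl)
  | y :: L, θ => by
      show (Formula.not (.exT y (.not (allTs L φ)))).Sat I M θ ν ↔ _
      simp only [Formula.Sat, not_exists, not_not]
      constructor
      · intro h θ' hθ'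
        refine (sat_allTs (L := L)).1 (h (θ' y)) θ' fun v hv => ?_
        by_cases hvy : v = y
        · subst hvy; simp
        · rw [Function.update_of_ne hvy]
          exact hθ' v (by simp [hvy, hv])
      · intro h t
        refine (sat_allTs (L := L)).2 fun θ' hθ' => h θ' fun v hv => ?_
        simp only [List.mem_cons, not_or] at hv
        rw [hθ' v hv.2, Function.update_of_ne hv.1]

theorem sat_allCs {φ : Formula P N Ω Ξ} {M : Marking P N C} {θ : ℕ → ℕ} :
    ∀ {L : List ℕ} {ν : ℕ → C},
      ((allCs L φ).Sat I M θ ν ↔ ∀ ν' : ℕ → C, (∀ v, v ∉ L → ν' v = ν v) → φ.Sat I M θ ν')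
  | [], ν => by
      simp only [allCs, List.foldr]
      constructor
      · intro h ν' hν'
        have : ν' = ν := funext fun v => hν' v (by simp)
        rwa [this]
      · intro h
        exact h ν (fun _ _ => rfl)
  | y :: L, ν => by
      show (Formula.not (.exC y (.not (allCs L φ)))).Sat I M θ ν ↔ _
      simp only [Formula.Sat, not_exists, not_not]
      constructor
      · intro h ν' hν'
        refine (sat_allCs (L := L)).1 (h (ν' y)) ν' fun v hv => ?_
        by_cases hvy : v = y
        · subst hvy; simp
        · rw [Function.update_of_ne hvy]
          exact hν' v (by simp [hvy, hv])
      · intro h a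
        refine (sat_allCs (L := L)).2 fun ν' hν' => h ν' fun v hv => ?_
        simp only [List.mem_cons, not_or] at hv
        rw [hν' v hv.2, Function.update_of_ne hv.1]

/-- close up a formula whose satisfaction is valuation-independent -/
theorem closed_pi1_of_defines [Nonempty C] {Φ : Formula P N Ω Ξ} (hΦ : InPi 1 Φ)
    {X : Set (Marking P N C)} (hdef : ∀ (M : Marking P N C) θ ν, (Φ.Sat I M θ ν ↔ M ∈ X)) :
    ∃ Ψ : Formula P N Ω Ξ, Ψ.Closed ∧ InPi 1 Ψ ∧ Ψ.models I = X := by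
  refine ⟨allTs Φ.freeT (allCs Φ.freeC Φ), ⟨?_, ?_⟩, hΦ.one_allCs.one_allTs, ?_⟩
  · rw [List.eq_nil_iff_forall_not_mem]
    intro v hv
    rw [mem_freeT_allTs, freeT_allCs] at hv
    exact hv.2 hv.1
  · rw [List.eq_nil_iff_forall_not_mem]
    intro v hv
    rw [freeC_allTs, mem_freeC_allCs] at hv
    exact hv.2 hv.1
  · ext M
    simp only [Formula.models, Set.mem_setOf_eq]
    constructor
    · intro h
      obtain ⟨ν⟩ := (inferInstance : Nonempty (ℕ → C))
      have := (sat_allTs I).1 (h id ν) id (fun _ _ => rfl)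
      have := (sat_allCs I).1 this ν (fun _ _ => rfl)
      exact (hdef M id ν).1 this
    · intro h θ ν
      rw [sat_allTs]
      intro θ' _
      rw [sat_allCs]
      intro ν' _
      exact (hdef M θ' ν').2 h

theorem IsQF.conjList {L : List (Formula P N Ω Ξ)} (h : ∀ f ∈ L, IsQF f) :
    IsQF (conjList L) := by
  induction L with
  | nil => exact .tru
  | cons a L ihL =>
      exact .not (.or (.not (h a (by simp))) (.not (ihL fun f hf => h f (by simp [hf]))))

theorem sat_conjList {M : Marking P N C} {θ : ℕ → ℕ} {ν : ℕ → C} :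
    ∀ {L : List (Formula P N Ω Ξ)},
      ((conjList L).Sat I M θ ν ↔ ∀ f ∈ L, f.Sat I M θ ν)
  | [] => by simp [conjList, Formula.Sat]
  | a :: L => by
      show (Formula.and a (conjList L)).Sat I M θ ν ↔ _
      rw [Formula.sat_and, sat_conjList (L := L)]
      simp

end CML


namespace CML

variable {P : Type} {N : ℕ} {Ω : Type} {Ξ : Type} {C : Type}
variable (I : Interp C Ω Ξ)

/-- no token quantifier -/
def Formula.noExT : Formula P N Ω Ξ → Prop
  | .not φ => φ.noExT
  | .or φ ψ => φ.noExT ∧ ψ.noExT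
  | .exT _ _ => False
  | .exC _ φ => φ.noExT
  | _ => True

theorem IsQF.noExT {φ : Formula P N Ω Ξ} (h : IsQF φ) : φ.noExT := by
  induction h with
  | tru => trivial
  | teq => trivial
  | place => trivial
  | rel => trivial
  | not _ ih => exact ih
  | or _ _ ih1 ih2 => exact ⟨ih1, ih2⟩

theorem InSigma0.noExT {φ : Formula P N Ω Ξ} (h : InSigma0 φ) : φ.noExT := by
  induction h with
  | of_qf hq => exact hq.noExT
  | exC _ ih => exact ih
  | allC _ ih => exact ih

open Classical in
/-- relativization of atoms w.r.t. a partial reinterpretation of token variables -/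
noncomputable def Formula.relAt (ρ : ℕ → Option (Option P × (Fin N → ℕ))) :
    Formula P N Ω Ξ → Formula P N Ω Ξ
  | .tru => .tru
  | .teq x y => .teq x y
  | .place p x =>
      match ρ x with
      | some (pl, _) => if pl = p then .tru else .not .tru
      | none => .place p x
  | .rel r n f => .rel r n (fun i => (f i).substDelta (fun x => (ρ x).map Prod.snd))
  | .not φ => .not (φ.relAt ρ)
  | .or φ ψ => .or (φ.relAt ρ) (ψ.relAt ρ)
  | .exT x φ => .exT x (φ.relAt ρ)
  | .exC z φ => .exC z (φ.relAt ρ)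

theorem IsQF.relAt {φ : Formula P N Ω Ξ} (h : IsQF φ)
    {ρ : ℕ → Option (Option P × (Fin N → ℕ))} : IsQF (φ.relAt ρ) := by
  induction h with
  | tru => exact .tru
  | @place p x =>
      show IsQF ((Formula.place p x).relAt ρ)
      rw [Formula.relAt]
      rcases hρ : ρ x with _ | ⟨pl, g⟩
      · exact .place
      · by_cases hpl : pl = p <;> simp [hpl] <;> [exact .tru; exact .not .tru]
  | teq => exact .teq
  | rel => exact .rel
  | not _ ih => exact .not ih
  | or _ _ ih1 ih2 => exact .or ih1 ih2

theorem InSigma0.relAt {φ : Formula P N Ω Ξ} (h : InSigma0 φ)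
    {ρ : ℕ → Option (Option P × (Fin N → ℕ))} : InSigma0 (φ.relAt ρ) := by
  induction h with
  | of_qf hq => exact .of_qf hq.relAt
  | exC _ ih => exact .exC ih
  | allC _ ih => exact .allC ih

theorem Term.val_substDelta {σ : ℕ → Option (Fin N → ℕ)} {M M' : Marking P N C}
    {θ : ℕ → ℕ} {ν : ℕ → C} :
    ∀ {t : Term N Ω},
      (∀ x ∈ t.tvars, (σ x = none → (M (θ x)).2 = (M' (θ x)).2) ∧
        (∀ g, σ x = some g → ∀ k, ν (g k) = (M' (θ x)).2 k)) →
      (t.substDelta σ).val I M θ ν = t.val I M' θ ν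
  | .cvar z, _ => rfl
  | .delta k x, h => by
      have hx := h x (by simp [Term.tvars])
      rcases hσ : σ x with _ | g
      · simp only [Term.substDelta, hσ, Term.val]
        rw [hx.1 hσ]
      · simp only [Term.substDelta, hσ, Term.val]
        exact hx.2 g hσ k
  | .op o n f, h => by
      simp only [Term.substDelta, Term.val]
      have : ∀ i : Fin n, ((f i).substDelta σ).val I M θ ν = (f i).val I M' θ ν := fun i =>
        Term.val_substDelta fun x hx => h x (by
          simp only [Term.tvars, List.mem_flatten]
          exact ⟨(f i).tvars, List.mem_ofFn.2 ⟨i, rfl⟩, hx⟩)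
      simp only [this]

theorem Formula.sat_relAt {ρ : ℕ → Option (Option P × (Fin N → ℕ))} {M M' : Marking P N C} :
    ∀ {φ : Formula P N Ω Ξ} {θ : ℕ → ℕ} {ν : ℕ → C}, φ.noExT →
      (∀ x pl g, ρ x = some (pl, g) → ∀ k : Fin N, φ.cvarBound ≤ g k) →
      (∀ x ∈ φ.freeT,
        (ρ x = none → M' (θ x) = M (θ x)) ∧
        (∀ pl g, ρ x = some (pl, g) → (M' (θ x)).1 = pl ∧ ∀ k, (M' (θ x)).2 k = ν (g k))) →
      ((φ.relAt ρ).Sat I M θ ν ↔ φ.Sat I M' θ ν)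
  | .tru, θ, ν, _, _, _ => Iff.rfl
  | .teq x y, θ, ν, _, _, _ => Iff.rfl
  | .place p x, θ, ν, _, _, hcond => by
      have hx := hcond x (by simp [Formula.freeT])
      rw [Formula.relAt]
      rcases hρ : ρ x with _ | ⟨pl, g⟩
      · simp only [Formula.Sat]
        rw [hx.1 hρ]
      · have h1 := (hx.2 pl g hρ).1
        by_cases hpl : pl = p
        · simp only [hpl, if_pos rfl, Formula.Sat]
          subst hpl
          simp [h1, Formula.Sat]
        · simp only [if_neg hpl, Formula.Sat]
          constructor
          · intro h; exact absurd h (by simp)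
          · intro h; rw [h] at h1; exact absurd h1.symm hpl
  | .rel r n f, θ, ν, _, _, hcond => by
      rw [Formula.relAt]
      simp only [Formula.Sat]
      have : ∀ i : Fin n,
          ((f i).substDelta (fun x => (ρ x).map Prod.snd)).val I M θ ν = (f i).val I M' θ ν :=
        fun i => Term.val_substDelta I fun x hx => by
          have hx' := hcond x (by
            simp only [Formula.freeT, List.mem_flatten]
            exact ⟨(f i).tvars, List.mem_ofFn.2 ⟨i, rfl⟩, hx⟩)
          constructor
          · intro hσ
            rw [Option.map_eq_none_iff] at hσ
            rw [hx'.1 hσ]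
          · intro g hσ k
            rw [Option.map_eq_some_iff] at hσ
            obtain ⟨⟨pl, g'⟩, hρx, hg⟩ := hσ
            cases hg
            exact ((hx'.2 pl _ hρx).2 k).symm
      simp only [this]
  | .not φ, θ, ν, hne, hfresh, hcond => by
      rw [Formula.relAt]
      simp only [Formula.Sat]
      exact not_congr (Formula.sat_relAt hne hfresh hcond)
  | .or φ ψ, θ, ν, hne, hfresh, hcond => by
      rw [Formula.relAt]
      simp only [Formula.Sat]
      exact or_congr
        (Formula.sat_relAt hne.1
          (fun x pl g hx k => le_trans (by simp [Formula.cvarBound]) (hfresh x pl g hx k))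
          (fun x hx => hcond x (by simp [Formula.freeT, hx])))
        (Formula.sat_relAt hne.2
          (fun x pl g hx k => le_trans (by simp [Formula.cvarBound]) (hfresh x pl g hx k))
          (fun x hx => hcond x (by simp [Formula.freeT, hx])))
  | .exC z φ, θ, ν, hne, hfresh, hcond => by
      rw [Formula.relAt]
      simp only [Formula.Sat]
      refine exists_congr fun a => Formula.sat_relAt hne
        (fun x pl g hx k => le_trans (by simp [Formula.cvarBound]) (hfresh x pl g hx k))
        (fun x hx => ?_)
      have hx' := hcond x (by simpa [Formula.freeT] using hx)
      refine ⟨hx'.1, fun pl g hρ => ⟨(hx'.2 pl g hρ).1, fun k => ?_⟩⟩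
      rw [(hx'.2 pl g hρ).2 k, Function.update_of_ne]
      have := hfresh x pl g hρ k
      simp only [Formula.cvarBound] at this
      omega
end CML


namespace CML

variable {P : Type} {N : ℕ} {Ω : Type} {Ξ : Type} {C : Type}
variable (I : Interp C Ω Ξ)

theorem List.getD_mem {l : List ℕ} {i : ℕ} (h : i < l.length) : l.getD i 0 ∈ l := by
  rw [List.getD_eq_getElem _ _ h]; exact List.getElem_mem _

theorem List.getD_indexOf' {l : List ℕ} {a : ℕ} (h : a ∈ l) : l.getD (l.idxOf a) 0 = a := by
  rw [List.getD_eq_getElem _ _ (List.idxOf_lt_length_iff.2 h)]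
  exact List.getElem_idxOf _

theorem List.indexOf_getD {l : List ℕ} (h : l.Nodup) {i : ℕ} (hi : i < l.length) :
    l.idxOf (l.getD i 0) = i := by
  rw [List.getD_eq_getElem _ _ hi]
  exact List.Nodup.idxOf_getElem h _ _

theorem List.mem_iff_getD {l : List ℕ} {a : ℕ} :
    a ∈ l ↔ ∃ i, i < l.length ∧ l.getD i 0 = a := by
  constructor
  · intro h
    exact ⟨l.idxOf a, List.idxOf_lt_length_iff.2 h, List.getD_indexOf' h⟩
  · rintro ⟨i, hi, rfl⟩
    exact List.getD_mem hi

/-! ### allMaps -/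

theorem mem_allMaps_length : ∀ {ys xs l : List ℕ}, l ∈ allMaps ys xs → l.length = ys.length
  | [], xs, l, h => by simp [allMaps] at h; simp [h]
  | y :: ys, xs, l, h => by
      simp only [allMaps, List.mem_flatten, List.mem_map] at h
      obtain ⟨_, ⟨v, _, rfl⟩, hl⟩ := h
      obtain ⟨l', hl', rfl⟩ := List.mem_map.1 hl
      simp [mem_allMaps_length hl']

theorem mem_allMaps_entries : ∀ {ys xs l : List ℕ}, l ∈ allMaps ys xs →
    ∀ i < l.length, l.getD i 0 ∈ xs
  | [], xs, l, h => by simp [allMaps] at h; simp [h]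
  | y :: ys, xs, l, h => by
      simp only [allMaps, List.mem_flatten, List.mem_map] at h
      obtain ⟨_, ⟨v, hv, rfl⟩, hl⟩ := h
      obtain ⟨l', hl', rfl⟩ := List.mem_map.1 hl
      intro i hi
      cases i with
      | zero => simpa using hv
      | succ i =>
          simp only [List.getD_cons_succ]
          exact mem_allMaps_entries hl' i (by simpa using hi)

theorem map_mem_allMaps (f : ℕ → ℕ) : ∀ {ys xs : List ℕ}, (∀ y ∈ ys, f y ∈ xs) →
    ys.map f ∈ allMaps ys xs
  | [], xs, _ => by simp [allMaps]
  | y :: ys, xs, h => by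
      simp only [allMaps, List.mem_flatten, List.mem_map, List.map_cons]
      exact ⟨(allMaps ys xs).map (fun l => f y :: l), ⟨f y, h y (by simp), rfl⟩,
        List.mem_map.2 ⟨ys.map f, map_mem_allMaps f (fun y' hy' => h y' (by simp [hy'])), rfl⟩⟩

/-! ### the updated marking -/

/-- the marking after firing: tokens of `ts` moved to `⊥` with colors `ds`,
tokens of `us` moved into the `post` places with colors `cs` -/
def updM (M : Marking P N C) (post : List P) (ts us : List ℕ)
    (cs ds : ℕ → Fin N → C) : Marking P N C :=
  fun t =>
    if t ∈ ts then (none, ds (ts.idxOf t))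
    else if t ∈ us then (post[us.idxOf t]?, cs (us.idxOf t))
    else M t

/-- the delta-substitution used in `Transition.Step` -/
def stepσ (τ : Transition P N Ω Ξ) : ℕ → Option (Fin N → ℕ) := fun v =>
  if τ.pre.length ≤ v ∧ v < τ.pre.length + τ.post.length then
    some (fun k => τ.guard.cvarBound + (v - τ.pre.length) * N + k.val) else none

theorem step_char (τ : Transition P N Ω Ξ) (M M' : Marking P N C) :
    τ.Step I M M' ↔ ∃ ts us : List ℕ, ∃ cs ds : ℕ → Fin N → C,
      ts.length = τ.pre.length ∧ us.length = τ.post.length ∧ ts.Nodup ∧ us.Nodup ∧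
      (∀ i < τ.pre.length, (M (ts.getD i 0)).1 = τ.pre[i]?) ∧
      (∀ j < τ.post.length, (M (us.getD j 0)).1 = none) ∧
      (∃ ν : ℕ → C,
        (∀ j < τ.post.length, ∀ k : Fin N, ν (τ.guard.cvarBound + j * N + k.val) = cs j k) ∧
        (τ.guard.substDelta (stepσ τ)).Sat I M (fun v => ts.getD v 0) ν) ∧
      M' = updM M τ.post ts us cs ds := by
  constructor
  · rintro ⟨ts, us, h1, h2, h3, h4, h5, h6, h7, ν, hν, hsat⟩
    have hdisj : ∀ t, t ∈ ts → t ∈ us → False := by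
      intro t hts hus
      have hi := List.idxOf_lt_length_iff.2 hts
      have hj := List.idxOf_lt_length_iff.2 hus
      have e1 := (h5 (ts.idxOf t) (by omega)).1
      have e2 := (h6 (us.idxOf t) (by omega)).1
      rw [List.getD_indexOf' hts] at e1
      rw [List.getD_indexOf' hus] at e2
      rw [e2] at e1
      have : τ.pre[ts.idxOf t]? = some (τ.pre[ts.idxOf t]'(by omega)) :=
        List.getElem?_eq_getElem _
      rw [← e1] at this
      simp at this
    refine ⟨ts, us, fun j k => (M' (us.getD j 0)).2 k, fun i k => (M' (ts.getD i 0)).2 k,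
      h1, h2, h3, h4, fun i hi => (h5 i hi).1, fun j hj => (h6 j hj).1, ⟨ν, hν, hsat⟩, ?_⟩
    funext t
    by_cases hts : t ∈ ts
    · have hi := List.idxOf_lt_length_iff.2 hts
      have e := (h5 (ts.idxOf t) (by omega)).2
      rw [List.getD_indexOf' hts] at e
      rw [updM, if_pos hts]
      have : M' t = ((M' t).1, (M' t).2) := rfl
      rw [this, e]
      congr 1
      funext k
      rw [List.getD_indexOf' hts]
    · by_cases hus : t ∈ us
      · have hj := List.idxOf_lt_length_iff.2 hus
        have e := (h6 (us.idxOf t) (by omega)).2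
        rw [List.getD_indexOf' hus] at e
        rw [updM, if_neg hts, if_pos hus]
        have : M' t = ((M' t).1, (M' t).2) := rfl
        rw [this, e]
        congr 1
        funext k
        rw [List.getD_indexOf' hus]
      · rw [updM, if_neg hts, if_neg hus]
        exact (h7 t hts hus).symm
  · rintro ⟨ts, us, cs, ds, h1, h2, h3, h4, h5, h6, ⟨ν, hν, hsat⟩, rfl⟩
    have hdisj : ∀ t, t ∈ ts → t ∈ us → False := by
      intro t hts hus
      have hi := List.idxOf_lt_length_iff.2 hts
      have hj := List.idxOf_lt_length_iff.2 hus
      have e1 := h5 (ts.idxOf t) (by omega)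
      have e2 := h6 (us.idxOf t) (by omega)
      rw [List.getD_indexOf' hts] at e1
      rw [List.getD_indexOf' hus] at e2
      rw [e2] at e1
      have : τ.pre[ts.idxOf t]? = some (τ.pre[ts.idxOf t]'(by omega)) :=
        List.getElem?_eq_getElem _
      rw [← e1] at this
      simp at this
    refine ⟨ts, us, h1, h2, h3, h4, fun i hi => ⟨h5 i hi, ?_⟩, fun j hj => ⟨h6 j hj, ?_⟩,
      fun t hts hus => ?_, ⟨ν, fun j hj k => ?_, hsat⟩⟩
    · have hmem : ts.getD i 0 ∈ ts := List.getD_mem (by omega)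
      rw [updM, if_pos hmem]
    · have hmem : us.getD j 0 ∈ us := List.getD_mem (by omega)
      have hnotts : us.getD j 0 ∉ ts := fun hc => hdisj _ hc hmem
      rw [updM, if_neg hnotts, if_pos hmem]
      simp only
      rw [List.indexOf_getD h4 (by omega)]
    · rw [updM, if_neg hts, if_neg hus]
    · have hmem : us.getD j 0 ∈ us := List.getD_mem (by omega)
      have hnotts : us.getD j 0 ∉ ts := fun hc => hdisj _ hc hmem
      rw [hν j hj k]
      rw [updM, if_neg hnotts, if_pos hmem]
      simp only
      rw [List.indexOf_getD h4 (by omega)]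

end CML


namespace CML

variable {P : Type} {N : ℕ} {Ω : Type} {Ξ : Type} {C : Type}
variable (I : Interp C Ω Ξ)

theorem Term.mem_tvars_substDelta {σ : ℕ → Option (Fin N → ℕ)} :
    ∀ {t : Term N Ω} {v : ℕ}, v ∈ (t.substDelta σ).tvars → v ∈ t.tvars ∧ σ v = none
  | .cvar z, v, h => by simp [Term.substDelta, Term.tvars] at h
  | .delta k x, v, h => by
      rcases hσ : σ x with _ | g
      · simp only [Term.substDelta, hσ, Term.tvars, List.mem_singleton] at h
        subst h; exact ⟨by simp [Term.tvars], hσ⟩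
      · simp [Term.substDelta, hσ, Term.tvars] at h
  | .op o n f, v, h => by
      simp only [Term.substDelta, Term.tvars, List.mem_flatten] at h ⊢
      obtain ⟨l, hl, hv⟩ := h
      obtain ⟨i, rfl⟩ := List.mem_ofFn.1 hl
      obtain ⟨h1, h2⟩ := Term.mem_tvars_substDelta hv
      exact ⟨⟨(f i).tvars, List.mem_ofFn.2 ⟨i, rfl⟩, h1⟩, h2⟩

theorem Term.mem_cvars_substDelta {σ : ℕ → Option (Fin N → ℕ)} :
    ∀ {t : Term N Ω} {z : ℕ}, z ∈ (t.substDelta σ).cvars →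
      z ∈ t.cvars ∨ ∃ x ∈ t.tvars, ∃ g, σ x = some g ∧ ∃ k : Fin N, z = g k
  | .cvar w, z, h => Or.inl h
  | .delta k x, z, h => by
      rcases hσ : σ x with _ | g
      · simp [Term.substDelta, hσ, Term.cvars] at h
      · simp only [Term.substDelta, hσ, Term.cvars, List.mem_singleton] at h
        exact Or.inr ⟨x, by simp [Term.tvars], g, hσ, k, h⟩
  | .op o n f, z, h => by
      simp only [Term.substDelta, Term.cvars, List.mem_flatten] at h
      obtain ⟨l, hl, hz⟩ := h
      obtain ⟨i, rfl⟩ := List.mem_ofFn.1 hl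
      rcases Term.mem_cvars_substDelta hz with h1 | ⟨x, hx, g, hg, k, hk⟩
      · exact Or.inl (by
          simp only [Term.cvars, List.mem_flatten]
          exact ⟨(f i).cvars, List.mem_ofFn.2 ⟨i, rfl⟩, h1⟩)
      · exact Or.inr ⟨x, by
          simp only [Term.tvars, List.mem_flatten]
          exact ⟨(f i).tvars, List.mem_ofFn.2 ⟨i, rfl⟩, hx⟩, g, hg, k, hk⟩

theorem Formula.mem_freeT_substDelta : ∀ {φ : Formula P N Ω Ξ}
    {σ : ℕ → Option (Fin N → ℕ)} {v : ℕ}, v ∈ (φ.substDelta σ).freeT →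
      v ∈ φ.freeT ∧ (σ v = none ∨ v ∈ φ.atomTVars)
  | .tru, σ, v, h => by simp [Formula.substDelta, Formula.freeT] at h
  | .teq x y, σ, v, h => ⟨h, Or.inr h⟩
  | .place p x, σ, v, h => ⟨h, Or.inr h⟩
  | .rel r n f, σ, v, h => by
      simp only [Formula.substDelta, Formula.freeT, List.mem_flatten] at h ⊢
      obtain ⟨l, hl, hv⟩ := h
      obtain ⟨i, rfl⟩ := List.mem_ofFn.1 hl
      obtain ⟨h1, h2⟩ := Term.mem_tvars_substDelta hv
      exact ⟨⟨(f i).tvars, List.mem_ofFn.2 ⟨i, rfl⟩, h1⟩, Or.inl h2⟩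
  | .not φ, σ, v, h => Formula.mem_freeT_substDelta (φ := φ) h
  | .or φ ψ, σ, v, h => by
      simp only [Formula.substDelta, Formula.freeT, List.mem_append] at h ⊢
      simp only [Formula.atomTVars, List.mem_append]
      rcases h with h | h
      · obtain ⟨h1, h2⟩ := Formula.mem_freeT_substDelta h
        exact ⟨Or.inl h1, h2.imp id Or.inl⟩
      · obtain ⟨h1, h2⟩ := Formula.mem_freeT_substDelta h
        exact ⟨Or.inr h1, h2.imp id Or.inr⟩
  | .exT x φ, σ, v, h => by
      simp only [Formula.substDelta, Formula.freeT, List.mem_filter] at h ⊢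
      obtain ⟨h1, h2⟩ := h
      obtain ⟨h3, h4⟩ := Formula.mem_freeT_substDelta h1
      have hvx : v ≠ x := by simpa using h2
      refine ⟨⟨h3, by simpa using hvx⟩, ?_⟩
      rcases h4 with h4 | h4
      · simp only [if_neg hvx] at h4
        exact Or.inl h4
      · exact Or.inr h4
  | .exC z φ, σ, v, h => Formula.mem_freeT_substDelta (φ := φ) h

theorem Formula.mem_freeC_substDelta : ∀ {φ : Formula P N Ω Ξ}
    {σ : ℕ → Option (Fin N → ℕ)} {z : ℕ}, z ∈ (φ.substDelta σ).freeC →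
      z ∈ φ.freeC ∨ ∃ x g, σ x = some g ∧ ∃ k : Fin N, z = g k
  | .tru, σ, z, h => by simp [Formula.substDelta, Formula.freeC] at h
  | .teq x y, σ, z, h => by simp [Formula.substDelta, Formula.freeC] at h
  | .place p x, σ, z, h => by simp [Formula.substDelta, Formula.freeC] at h
  | .rel r n f, σ, z, h => by
      simp only [Formula.substDelta, Formula.freeC, List.mem_flatten] at h ⊢
      obtain ⟨l, hl, hz⟩ := h
      obtain ⟨i, rfl⟩ := List.mem_ofFn.1 hl
      rcases Term.mem_cvars_substDelta hz with h1 | ⟨x, _, g, hg, k, hk⟩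
      · exact Or.inl ⟨(f i).cvars, List.mem_ofFn.2 ⟨i, rfl⟩, h1⟩
      · exact Or.inr ⟨x, g, hg, k, hk⟩
  | .not φ, σ, z, h => Formula.mem_freeC_substDelta (φ := φ) h
  | .or φ ψ, σ, z, h => by
      simp only [Formula.substDelta, Formula.freeC, List.mem_append] at h ⊢
      rcases h with h | h
      · rcases Formula.mem_freeC_substDelta h with h1 | h1
        · exact Or.inl (Or.inl h1)
        · exact Or.inr h1
      · rcases Formula.mem_freeC_substDelta h with h1 | h1
        · exact Or.inl (Or.inr h1)
        · exact Or.inr h1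
  | .exT x φ, σ, z, h => by
      rcases Formula.mem_freeC_substDelta (φ := φ) h with h1 | ⟨x', g, hg, k, hk⟩
      · exact Or.inl h1
      · by_cases hx : x' = x
        · subst hx; simp at hg
        · simp only [if_neg hx] at hg
          exact Or.inr ⟨x', g, hg, k, hk⟩
  | .exC w φ, σ, z, h => by
      simp only [Formula.substDelta, Formula.freeC, List.mem_filter] at h ⊢
      obtain ⟨h1, h2⟩ := h
      rcases Formula.mem_freeC_substDelta h1 with h3 | h3
      · exact Or.inl ⟨h3, h2⟩
      · exact Or.inr h3

theorem Formula.fsize_substDelta : ∀ {φ : Formula P N Ω Ξ} {σ : ℕ → Option (Fin N → ℕ)},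
    (φ.substDelta σ).fsize = φ.fsize
  | .tru, _ => rfl
  | .teq _ _, _ => rfl
  | .place _ _, _ => rfl
  | .rel _ _ _, _ => rfl
  | .not φ, σ => by
      simp only [Formula.substDelta, Formula.fsize]; rw [Formula.fsize_substDelta]
  | .or φ ψ, σ => by
      simp only [Formula.substDelta, Formula.fsize]
      rw [Formula.fsize_substDelta, Formula.fsize_substDelta]
  | .exT x φ, σ => by
      simp only [Formula.substDelta, Formula.fsize]; rw [Formula.fsize_substDelta]
  | .exC z φ, σ => by
      simp only [Formula.substDelta, Formula.fsize]; rw [Formula.fsize_substDelta]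

theorem IsQF.substDelta {φ : Formula P N Ω Ξ} (h : IsQF φ) (σ : ℕ → Option (Fin N → ℕ)) :
    IsQF (φ.substDelta σ) := by
  induction h generalizing σ with
  | tru => exact .tru
  | teq => exact .teq
  | place => exact .place
  | rel => exact .rel
  | not _ ih => exact .not (ih σ)
  | or _ _ ih1 ih2 => exact .or (ih1 σ) (ih2 σ)

theorem InSigma0.substDelta {φ : Formula P N Ω Ξ} (h : InSigma0 φ)
    (σ : ℕ → Option (Fin N → ℕ)) : InSigma0 (φ.substDelta σ) := by
  induction h generalizing σ with
  | of_qf hq => exact .of_qf (hq.substDelta σ)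
  | exC _ ih => exact .exC (ih _)
  | allC _ ih => exact .allC (ih _)

theorem InSigma.one_substDelta {φ : Formula P N Ω Ξ} (h : InSigma 1 φ)
    (σ : ℕ → Option (Fin N → ℕ)) : InSigma 1 (φ.substDelta σ) := by
  suffices H : ∀ n (φ : Formula P N Ω Ξ), φ.fsize = n → InSigma 1 φ →
      ∀ σ : ℕ → Option (Fin N → ℕ), InSigma 1 (φ.substDelta σ) from H _ φ rfl h σ
  intro n
  induction n using Nat.strong_induction_on with
  | _ n ih =>
  intro φ hn h σ
  cases h with
  | of_pi hs =>
      cases hs with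
      | zero h0 => exact .of_pi (.zero (h0.substDelta σ))
  | exT hp =>
      simp only [Formula.substDelta]
      exact .exT (ih _ (by subst hn; simp only [Formula.fsize]; omega) _ rfl hp _)
  | exC hp =>
      simp only [Formula.substDelta]
      exact .exC (ih _ (by subst hn; simp only [Formula.fsize]; omega) _ rfl hp _)

theorem Formula.boundC_substT : ∀ {φ : Formula P N Ω Ξ} {σ : ℕ → ℕ},
    (φ.substT σ).boundC = φ.boundC
  | .tru, _ => rfl
  | .teq _ _, _ => rfl
  | .place _ _, _ => rfl
  | .rel _ _ _, _ => rfl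
  | .not φ, σ => Formula.boundC_substT (φ := φ)
  | .or φ ψ, σ => by
      simp only [Formula.substT, Formula.boundC]
      rw [Formula.boundC_substT, Formula.boundC_substT]
  | .exT x φ, σ => by
      simp only [Formula.substT, Formula.boundC]
      exact Formula.boundC_substT (φ := φ)
  | .exC z φ, σ => by
      simp only [Formula.substT, Formula.boundC]
      rw [Formula.boundC_substT]

end CML


namespace CML

variable {P : Type} {N : ℕ} {Ω : Type} {Ξ : Type} {C : Type}
variable (I : Interp C Ω Ξ)

theorem List.getD_map' (f : ℕ → ℕ) (l : List ℕ) (i : ℕ) (h : i < l.length) :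
    (l.map f).getD i 0 = f (l.getD i 0) := by
  rw [List.getD_eq_getElem _ _ (by simpa using h), List.getD_eq_getElem _ _ h,
    List.getElem_map]

theorem sigma0_conj_of_equiv [Nonempty C] {L : List (Formula P N Ω Ξ)}
    (h : ∀ f ∈ L, ∃ ξ, InSigma0 ξ ∧ ∀ (M : Marking P N C) θ ν,
      (ξ.Sat I M θ ν ↔ f.Sat I M θ ν)) :
    ∃ Ξ', InSigma0 Ξ' ∧ ∀ (M : Marking P N C) θ ν,
      (Ξ'.Sat I M θ ν ↔ ∀ f ∈ L, f.Sat I M θ ν) := by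
  induction L with
  | nil => exact ⟨.tru, .of_qf .tru, fun M θ ν => by simp [Formula.Sat]⟩
  | cons a L ihL =>
      obtain ⟨ΞL, hΞL, hsL⟩ := ihL (fun f hf => h f (by simp [hf]))
      obtain ⟨ξa, hξa, hsa⟩ := h a (by simp)
      obtain ⟨Ξ', hΞ', hs⟩ := InSigma0.and_closure I hξa hΞL
      refine ⟨Ξ', hΞ', fun M θ ν => ?_⟩
      rw [hs M θ ν, hsa M θ ν, hsL M θ ν]
      simp

/-- the atom describing the `c`-coded case for the token variable `y` -/
def atomFor (n m : ℕ) (xv uv : ℕ → ℕ) (y c : ℕ) : Formula P N Ω Ξ :=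
  if c < n then .teq y (xv c)
  else if c < n + m then .teq y (uv (c - n))
  else conjList ((List.range n).map (fun i => .not (.teq y (xv i))) ++
    (List.range m).map (fun j => .not (.teq y (uv j))))

/-- hypothesis formula of an assignment code list `l` for the variables `ys` -/
def hypL (n m : ℕ) (xv uv : ℕ → ℕ) (ys l : List ℕ) : Formula P N Ω Ξ :=
  conjList ((List.range ys.length).map
    (fun idx => atomFor n m xv uv (ys.getD idx 0) (l.getD idx (n + m))))

/-- token-variable reinterpretation associated to an assignment code list -/
def rhoL (post : List P) (n m : ℕ) (cv dv : ℕ → Fin N → ℕ) (ys l : List ℕ) :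
    ℕ → Option (Option P × (Fin N → ℕ)) := fun y =>
  if y ∈ ys then
    (if l.getD (ys.idxOf y) (n + m) < n then
      some (none, fun k => dv (l.getD (ys.idxOf y) (n + m)) k)
     else if l.getD (ys.idxOf y) (n + m) < n + m then
       some (post[l.getD (ys.idxOf y) (n + m) - n]?,
         fun k => cv (l.getD (ys.idxOf y) (n + m) - n) k)
     else none)
  else none

theorem isQF_atomFor {n m : ℕ} {xv uv : ℕ → ℕ} {y c : ℕ} :
    IsQF (atomFor (P := P) (N := N) (Ω := Ω) (Ξ := Ξ) n m xv uv y c) := by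
  unfold atomFor
  split
  · exact .teq
  split
  · exact .teq
  · refine IsQF.conjList fun f hf => ?_
    simp only [List.mem_append, List.mem_map, List.mem_range] at hf
    rcases hf with ⟨i, _, rfl⟩ | ⟨j, _, rfl⟩
    · exact .not .teq
    · exact .not .teq

theorem isQF_hypL {n m : ℕ} {xv uv : ℕ → ℕ} {ys l : List ℕ} :
    IsQF (hypL (P := P) (N := N) (Ω := Ω) (Ξ := Ξ) n m xv uv ys l) := by
  refine IsQF.conjList fun f hf => ?_
  simp only [List.mem_map, List.mem_range] at hf
  obtain ⟨idx, _, rfl⟩ := hf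
  exact isQF_atomFor

theorem sat_hypL {n m : ℕ} {xv uv : ℕ → ℕ} {ys l : List ℕ}
    {M : Marking P N C} {θ : ℕ → ℕ} {ν : ℕ → C} :
    ((hypL (P := P) (N := N) (Ω := Ω) (Ξ := Ξ) n m xv uv ys l).Sat I M θ ν ↔
      ∀ idx < ys.length,
        (atomFor (P := P) (N := N) (Ω := Ω) (Ξ := Ξ) n m xv uv (ys.getD idx 0)
          (l.getD idx (n + m))).Sat I M θ ν) := by
  rw [hypL, sat_conjList]
  constructor
  · intro h idx hidx
    exact h _ (List.mem_map.2 ⟨idx, by simp [hidx], rfl⟩)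
  · intro h f hf
    simp only [List.mem_map, List.mem_range] at hf
    obtain ⟨idx, hidx, rfl⟩ := hf
    exact h idx hidx

theorem sat_atomFor_none {n m : ℕ} {xv uv : ℕ → ℕ} {y c : ℕ} (h1 : ¬ c < n) (h2 : ¬ c < n + m)
    {M : Marking P N C} {θ : ℕ → ℕ} {ν : ℕ → C} :
    ((atomFor (P := P) (N := N) (Ω := Ω) (Ξ := Ξ) n m xv uv y c).Sat I M θ ν ↔
      ((∀ i < n, θ y ≠ θ (xv i)) ∧ (∀ j < m, θ y ≠ θ (uv j)))) := by
  rw [atomFor, if_neg h1, if_neg h2, sat_conjList]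
  constructor
  · intro h
    constructor
    · intro i hi
      exact h (.not (.teq y (xv i))) (by
        simp only [List.mem_append, List.mem_map, List.mem_range]
        exact Or.inl ⟨i, hi, rfl⟩)
    · intro j hj
      exact h (.not (.teq y (uv j))) (by
        simp only [List.mem_append, List.mem_map, List.mem_range]
        exact Or.inr ⟨j, hj, rfl⟩)
  · rintro ⟨ha, hb⟩ f hf
    simp only [List.mem_append, List.mem_map, List.mem_range] at hf
    rcases hf with ⟨i, hi, rfl⟩ | ⟨j, hj, rfl⟩
    · exact ha i hi
    · exact hb j hj

end CML


namespace CML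

variable {P : Type} {N : ℕ} {Ω : Type} {Ξ : Type} {C : Type}
variable (I : Interp C Ω Ξ)

/-- specification of the relativized formula -/
def TransSpec (I : Interp C Ω Ξ) (post : List P) (n m : ℕ) (xv uv : ℕ → ℕ)
    (cv dv : ℕ → Fin N → ℕ) (ψ Θ : Formula P N Ω Ξ) : Prop :=
  ∀ (M : Marking P N C) (θ : ℕ → ℕ) (ν : ℕ → C) (ts us : List ℕ) (cs ds : ℕ → Fin N → C),
    ts.length = n → us.length = m → ts.Nodup → us.Nodup →
    (∀ t, t ∈ ts → t ∈ us → False) →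
    (∀ i, i < n → θ (xv i) = ts.getD i 0) →
    (∀ j, j < m → θ (uv j) = us.getD j 0) →
    (∀ j, j < m → ∀ k, ν (cv j k) = cs j k) → (∀ i, i < n → ∀ k, ν (dv i k) = ds i k) →
    (Θ.Sat I M θ ν ↔ ψ.Sat I (updM M post ts us cs ds) θ ν)

theorem trans_lemma [Nonempty C] (post : List P) (n m : ℕ) (xv uv : ℕ → ℕ)
    (cv dv : ℕ → Fin N → ℕ) {ψ : Formula P N Ω Ξ} (hψ : InPi 1 ψ)
    (hx : ∀ i, i < n → ψ.tvarSup ≤ xv i) (hu : ∀ j, j < m → ψ.tvarSup ≤ uv j)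
    (hcv : ∀ j k, ψ.cvarBound ≤ cv j k) (hdv : ∀ i k, ψ.cvarBound ≤ dv i k) :
    ∃ Θ : Formula P N Ω Ξ, InPi 1 Θ ∧ TransSpec I post n m xv uv cv dv ψ Θ := by
  suffices H : ∀ sz (ψ : Formula P N Ω Ξ), ψ.fsize = sz → InPi 1 ψ →
      (∀ i, i < n → ψ.tvarSup ≤ xv i) → (∀ j, j < m → ψ.tvarSup ≤ uv j) →
      (∀ j k, ψ.cvarBound ≤ cv j k) → (∀ i k, ψ.cvarBound ≤ dv i k) →
      ∃ Θ : Formula P N Ω Ξ, InPi 1 Θ ∧ TransSpec I post n m xv uv cv dv ψ Θ from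
    H _ ψ rfl hψ hx hu hcv hdv
  intro sz
  induction sz using Nat.strong_induction_on with
  | _ sz ih =>
  rintro ψ hsz hψ hx hu hcv hdv
  cases hψ with
  | @allT _ y ψ₀ hp =>
      have htsup : ψ₀.tvarSup ≤ (Formula.not (.exT y (.not ψ₀))).tvarSup := by
        simp only [Formula.tvarSup]; omega
      have hysup : y < (Formula.not (.exT y (.not ψ₀))).tvarSup := by
        simp only [Formula.tvarSup]; omega
      have hcb : ψ₀.cvarBound = (Formula.not (.exT y (.not ψ₀))).cvarBound := rfl
      obtain ⟨Θ₀, hΘ₀, hspec⟩ := ih ψ₀.fsize (by subst hsz; simp only [Formula.fsize]; omega)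
        ψ₀ rfl hp (fun i hi => le_trans htsup (hx i hi)) (fun j hj => le_trans htsup (hu j hj))
        (fun j k => hcb ▸ hcv j k) (fun i k => hcb ▸ hdv i k)
      refine ⟨.not (.exT y (.not Θ₀)), .allT hΘ₀, ?_⟩
      intro M θ ν ts us cs ds l1 l2 l3 l4 l5 l6 l7 l8 l9
      simp only [Formula.Sat, not_exists, not_not]
      refine forall_congr' fun t => ?_
      refine hspec M _ ν ts us cs ds l1 l2 l3 l4 l5 (fun i hi => ?_) (fun j hj => ?_) l8 l9
      · have hne : xv i ≠ y := by have := hx i hi; omega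
        rw [Function.update_of_ne hne]; exact l6 i hi
      · have hne : uv j ≠ y := by have := hu j hj; omega
        rw [Function.update_of_ne hne]; exact l7 j hj
  | @allC _ z ψ₀ hp =>
      have hcsup : ψ₀.cvarBound ≤ (Formula.not (.exC z (.not ψ₀))).cvarBound := by
        simp only [Formula.cvarBound]; omega
      have hzsup : z < (Formula.not (.exC z (.not ψ₀))).cvarBound := by
        simp only [Formula.cvarBound]; omega
      have htb : ψ₀.tvarSup = (Formula.not (.exC z (.not ψ₀))).tvarSup := rfl
      obtain ⟨Θ₀, hΘ₀, hspec⟩ := ih ψ₀.fsize (by subst hsz; simp only [Formula.fsize]; omega)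
        ψ₀ rfl hp (fun i hi => htb ▸ hx i hi) (fun j hj => htb ▸ hu j hj)
        (fun j k => le_trans hcsup (hcv j k)) (fun i k => le_trans hcsup (hdv i k))
      refine ⟨.not (.exC z (.not Θ₀)), .allC hΘ₀, ?_⟩
      intro M θ ν ts us cs ds l1 l2 l3 l4 l5 l6 l7 l8 l9
      simp only [Formula.Sat, not_exists, not_not]
      refine forall_congr' fun a => ?_
      refine hspec M θ _ ts us cs ds l1 l2 l3 l4 l5 l6 l7 (fun j hj k => ?_) (fun i hi k => ?_)
      · have hne : cv j k ≠ z := by have := hcv j k; omega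
        rw [Function.update_of_ne hne]; exact l8 j hj k
      · have hne : dv i k ≠ z := by have := hdv i k; omega
        rw [Function.update_of_ne hne]; exact l9 i hi k
  | of_sigma hs0 =>
    cases hs0 with
    | zero h0 =>
    clear hsz ih
    set ys := ψ.freeT.dedup with hys
    set codes := List.range (n + m + 1) with hcodes
    obtain ⟨Θ, hΘ, hsΘ⟩ := sigma0_conj_of_equiv I (L := (allMaps ys codes).map
        (fun l => .or (.not (hypL n m xv uv ys l)) (ψ.relAt (rhoL post n m cv dv ys l))))
      (by
        intro f hf
        obtain ⟨l, hl, rfl⟩ := List.mem_map.1 hf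
        obtain ⟨ξ, hξ, hs⟩ := InSigma0.or_closure I
          (φ := .not (hypL n m xv uv ys l)) (ψ := Formula.relAt (rhoL post n m cv dv ys l) ψ)
          (.of_qf (.not isQF_hypL)) h0.relAt
        exact ⟨ξ, hξ, fun M θ ν => by rw [hs M θ ν]; simp only [Formula.Sat]⟩)
    refine ⟨Θ, .of_sigma (.zero hΘ), ?_⟩
    intro M θ ν ts us cs ds l1 l2 l3 l4 l5 l6 l7 l8 l9
    rw [hsΘ M θ ν]
    have hkey : ∀ l ∈ allMaps ys codes, (hypL n m xv uv ys l).Sat I M θ ν →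
        (((ψ.relAt (rhoL post n m cv dv ys l)).Sat I M θ ν) ↔
          ψ.Sat I (updM M post ts us cs ds) θ ν) := by
      intro l hl hhyp
      have hlen := mem_allMaps_length hl
      refine Formula.sat_relAt I h0.noExT ?_ ?_
      · -- freshness
        intro x pl g hxg k
        by_cases hxys : x ∈ ys
        · rw [rhoL, if_pos hxys] at hxg
          by_cases hc1 : l.getD (ys.idxOf x) (n + m) < n
          · rw [if_pos hc1] at hxg
            simp only [Option.some.injEq, Prod.mk.injEq] at hxg
            rw [← hxg.2]
            exact hdv _ k
          · rw [if_neg hc1] at hxg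
            by_cases hc2 : l.getD (ys.idxOf x) (n + m) < n + m
            · rw [if_pos hc2] at hxg
              simp only [Option.some.injEq, Prod.mk.injEq] at hxg
              rw [← hxg.2]
              exact hcv _ k
            · rw [if_neg hc2] at hxg; cases hxg
        · rw [rhoL, if_neg hxys] at hxg; cases hxg
      · -- conditions
        intro x hxfree
        have hxys : x ∈ ys := by rw [hys]; exact List.mem_dedup.2 hxfree
        have hidx : ys.idxOf x < ys.length := List.idxOf_lt_length_iff.2 hxys
        have hxat : ys.getD (ys.idxOf x) 0 = x := List.getD_indexOf' hxys
        have hsat := (sat_hypL I).1 hhyp (ys.idxOf x) hidx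
        rw [hxat] at hsat
        by_cases hc1 : l.getD (ys.idxOf x) (n + m) < n
        · rw [atomFor, if_pos hc1] at hsat
          simp only [Formula.Sat] at hsat
          have hθx : θ x = ts.getD (l.getD (ys.idxOf x) (n + m)) 0 := by
            rw [hsat, l6 _ hc1]
          have hmem : ts.getD (l.getD (ys.idxOf x) (n + m)) 0 ∈ ts :=
            List.getD_mem (by omega)
          constructor
          · intro hnone
            rw [rhoL, if_pos hxys, if_pos hc1] at hnone; cases hnone
          · intro pl g hsome
            rw [rhoL, if_pos hxys, if_pos hc1] at hsome
            simp only [Option.some.injEq, Prod.mk.injEq] at hsome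
            rw [hθx]
            constructor
            · rw [← hsome.1, updM, if_pos hmem]
            · intro k
              rw [← hsome.2, updM, if_pos hmem]
              simp only
              rw [List.indexOf_getD l3 (by omega)]
              exact (l9 _ (by omega) k).symm
        · by_cases hc2 : l.getD (ys.idxOf x) (n + m) < n + m
          · rw [atomFor, if_neg hc1, if_pos hc2] at hsat
            simp only [Formula.Sat] at hsat
            have hθx : θ x = us.getD (l.getD (ys.idxOf x) (n + m) - n) 0 := by
              rw [hsat, l7 _ (by omega)]
            have hmem : us.getD (l.getD (ys.idxOf x) (n + m) - n) 0 ∈ us :=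
              List.getD_mem (by omega)
            have hnotts : us.getD (l.getD (ys.idxOf x) (n + m) - n) 0 ∉ ts :=
              fun hcon => l5 _ hcon hmem
            constructor
            · intro hnone
              rw [rhoL, if_pos hxys, if_neg hc1, if_pos hc2] at hnone; cases hnone
            · intro pl g hsome
              rw [rhoL, if_pos hxys, if_neg hc1, if_pos hc2] at hsome
              simp only [Option.some.injEq, Prod.mk.injEq] at hsome
              rw [hθx]
              constructor
              · rw [← hsome.1, updM, if_neg hnotts, if_pos hmem]
                simp only
                rw [List.indexOf_getD l4 (by omega)]
              · intro k
                rw [← hsome.2, updM, if_neg hnotts, if_pos hmem]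
                simp only
                rw [List.indexOf_getD l4 (by omega)]
                exact (l8 _ (by omega) k).symm
          · rw [sat_atomFor_none I hc1 hc2] at hsat
            have hnots : θ x ∉ ts := by
              rw [List.mem_iff_getD]
              rintro ⟨i, hi, hgi⟩
              exact hsat.1 i (by omega) (by rw [l6 i (by omega), hgi])
            have hnotu : θ x ∉ us := by
              rw [List.mem_iff_getD]
              rintro ⟨j, hj, hgj⟩
              exact hsat.2 j (by omega) (by rw [l7 j (by omega), hgj])
            constructor
            · intro _
              rw [updM, if_neg hnots, if_neg hnotu]
            · intro pl g hsome
              rw [rhoL, if_pos hxys, if_neg hc1, if_neg hc2] at hsome; cases hsome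
    constructor
    · intro hall
      set fc : ℕ → ℕ := fun y => if θ y ∈ ts then ts.idxOf (θ y)
        else if θ y ∈ us then n + us.idxOf (θ y) else n + m with hfc
      have hlmem : ys.map fc ∈ allMaps ys codes := by
        refine map_mem_allMaps fc (fun y hy => ?_)
        rw [hcodes, List.mem_range]
        by_cases h1 : θ y ∈ ts
        · simp only [hfc, if_pos h1]
          have := List.idxOf_lt_length_iff.2 h1; omega
        · by_cases h2 : θ y ∈ us
          · simp only [hfc, if_neg h1, if_pos h2]
            have := List.idxOf_lt_length_iff.2 h2; omega
          · simp only [hfc, if_neg h1, if_neg h2]; omega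
      have hf := hall _ (List.mem_map.2 ⟨ys.map fc, hlmem, rfl⟩)
      have hhyp : (hypL n m xv uv ys (ys.map fc)).Sat I M θ ν := by
        rw [sat_hypL]
        intro idx hidx
        have hgd : (ys.map fc).getD idx (n + m) = fc (ys.getD idx 0) := by
          rw [List.getD_eq_getElem _ _ (by simpa using hidx), List.getElem_map,
            List.getD_eq_getElem _ _ hidx]
        rw [hgd]
        by_cases h1 : θ (ys.getD idx 0) ∈ ts
        · have hlt : fc (ys.getD idx 0) < n := by
            simp only [hfc, if_pos h1]
            have := List.idxOf_lt_length_iff.2 h1; omega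
          rw [atomFor, if_pos hlt]
          simp only [Formula.Sat]
          rw [l6 _ hlt]
          simp only [hfc, if_pos h1]
          rw [List.getD_indexOf' h1]
        · by_cases h2 : θ (ys.getD idx 0) ∈ us
          · have hlt1 : ¬ fc (ys.getD idx 0) < n := by
              simp only [hfc, if_neg h1, if_pos h2]; omega
            have hlt2 : fc (ys.getD idx 0) < n + m := by
              simp only [hfc, if_neg h1, if_pos h2]
              have := List.idxOf_lt_length_iff.2 h2; omega
            rw [atomFor, if_neg hlt1, if_pos hlt2]
            simp only [Formula.Sat]
            have hsub : fc (ys.getD idx 0) - n = us.idxOf (θ (ys.getD idx 0)) := by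
              simp only [hfc, if_neg h1, if_pos h2]; omega
            rw [hsub, l7 _ (by have := List.idxOf_lt_length_iff.2 h2; omega),
              List.getD_indexOf' h2]
          · have hlt1 : ¬ fc (ys.getD idx 0) < n := by
              simp only [hfc, if_neg h1, if_neg h2]; omega
            have hlt2 : ¬ fc (ys.getD idx 0) < n + m := by
              simp only [hfc, if_neg h1, if_neg h2]; omega
            rw [sat_atomFor_none I hlt1 hlt2]
            constructor
            · intro i hi hcon
              exact h1 (by rw [hcon, l6 i hi]; exact List.getD_mem (by omega))
            · intro j hj hcon
              exact h2 (by rw [hcon, l7 j hj]; exact List.getD_mem (by omega))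
      simp only [Formula.Sat] at hf
      rcases hf with hf | hf
      · exact absurd hhyp hf
      · exact (hkey _ hlmem hhyp).1 hf
    · intro hM' f hf
      obtain ⟨l, hl, rfl⟩ := List.mem_map.1 hf
      simp only [Formula.Sat]
      by_cases hhyp : (hypL n m xv uv ys l).Sat I M θ ν
      · exact Or.inr ((hkey l hl hhyp).2 hM')
      · exact Or.inl hhyp

end CML


namespace CML

variable {P : Type} {N : ℕ} {Ω : Type} {Ξ : Type} {C : Type}
variable (I : Interp C Ω Ξ)

theorem nodup_iff_getD {l : List ℕ} :
    l.Nodup ↔ ∀ i j, i < l.length → j < l.length → i ≠ j → l.getD i 0 ≠ l.getD j 0 := by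
  constructor
  · intro h i j hi hj hij hc
    have h1 := List.indexOf_getD h hi
    rw [hc, List.indexOf_getD h hj] at h1
    exact hij h1.symm
  · intro h
    rw [List.nodup_iff_injective_getElem]
    rintro ⟨i, hi⟩ ⟨j, hj⟩ hij
    by_contra hne
    refine h i j hi hj (by simpa using fun hc => hne (by simp [hc])) ?_
    rw [List.getD_eq_getElem _ _ hi, List.getD_eq_getElem _ _ hj]
    simpa using hij

theorem getD_map_range {f : ℕ → ℕ} {n i : ℕ} (h : i < n) :
    ((List.range n).map f).getD i 0 = f i := by
  rw [List.getD_eq_getElem _ _ (by simpa using h)]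
  simp

/-- the "side conditions" formula for a transition -/
def sideF (pre : List P) (m : ℕ) (xv uv : ℕ → ℕ) : Formula P N Ω Ξ :=
  conjList ((List.range pre.length).map (fun i => .place pre[i]? (xv i)) ++
    (List.range m).map (fun j => .place none (uv j)) ++
    ((List.range pre.length).flatMap (fun i => (List.range pre.length).map (fun i' =>
      if i = i' then .tru else .not (.teq (xv i) (xv i'))))) ++
    ((List.range m).flatMap (fun j => (List.range m).map (fun j' =>
      if j = j' then .tru else .not (.teq (uv j) (uv j'))))))

theorem isQF_sideF {pre : List P} {m : ℕ} {xv uv : ℕ → ℕ} :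
    IsQF (sideF (N := N) (Ω := Ω) (Ξ := Ξ) pre m xv uv) := by
  refine IsQF.conjList fun f hf => ?_
  simp only [List.mem_append, List.mem_map, List.mem_flatMap, List.mem_range] at hf
  rcases hf with ((⟨i, _, rfl⟩ | ⟨j, _, rfl⟩) | ⟨i, _, hf⟩) | ⟨j, _, hf⟩
  · exact .place
  · exact .place
  · obtain ⟨i', _, rfl⟩ := hf
    split
    · exact .tru
    · exact .not .teq
  · obtain ⟨j', _, rfl⟩ := hf
    split
    · exact .tru
    · exact .not .teq

theorem sat_sideF {pre : List P} {m : ℕ} {xv uv : ℕ → ℕ} {M : Marking P N C}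
    {θ : ℕ → ℕ} {ν : ℕ → C} :
    ((sideF pre m xv uv).Sat I M θ ν ↔
      ((∀ i < pre.length, (M (θ (xv i))).1 = pre[i]?) ∧
       (∀ j < m, (M (θ (uv j))).1 = none) ∧
       (∀ i i', i < pre.length → i' < pre.length → i ≠ i' → θ (xv i) ≠ θ (xv i')) ∧
       (∀ j j', j < m → j' < m → j ≠ j' → θ (uv j) ≠ θ (uv j')))) := by
  rw [sideF, sat_conjList]
  constructor
  · intro h
    refine ⟨fun i hi => ?_, fun j hj => ?_, fun i i' hi hi' hne => ?_, fun j j' hj hj' hne => ?_⟩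
    · exact h _ (by
        simp only [List.mem_append, List.mem_map, List.mem_range]
        exact Or.inl (Or.inl (Or.inl ⟨i, hi, rfl⟩)))
    · exact h _ (by
        simp only [List.mem_append, List.mem_map, List.mem_range]
        exact Or.inl (Or.inl (Or.inr ⟨j, hj, rfl⟩)))
    · have := h (if i = i' then .tru else .not (.teq (xv i) (xv i'))) (by
        simp only [List.mem_append, List.mem_flatMap, List.mem_map, List.mem_range]
        exact Or.inl (Or.inr ⟨i, hi, ⟨i', hi', rfl⟩⟩))
      rw [if_neg hne] at this
      exact this
    · have := h (if j = j' then .tru else .not (.teq (uv j) (uv j'))) (by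
        simp only [List.mem_append, List.mem_flatMap, List.mem_map, List.mem_range]
        exact Or.inr ⟨j, hj, ⟨j', hj', rfl⟩⟩)
      rw [if_neg hne] at this
      exact this
  · rintro ⟨h1, h2, h3, h4⟩ f hf
    simp only [List.mem_append, List.mem_flatMap, List.mem_map, List.mem_range] at hf
    rcases hf with ((⟨i, hi, rfl⟩ | ⟨j, hj, rfl⟩) | ⟨i, hi, i', hi', rfl⟩) | ⟨j, hj, j', hj', rfl⟩
    · exact h1 i hi
    · exact h2 j hj
    · by_cases hne : i = i'
      · rw [if_pos hne]; trivial
      · rw [if_neg hne]; exact h3 i i' hi hi' hne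
    · by_cases hne : j = j'
      · rw [if_pos hne]; trivial
      · rw [if_neg hne]; exact h4 j j' hj hj' hne

theorem freeT_Gp_lt (τ : Transition P N Ω Ξ) :
    ∀ v ∈ (τ.guard.substDelta (stepσ τ)).freeT, v < τ.pre.length := by
  intro v hv
  obtain ⟨h1, h2⟩ := Formula.mem_freeT_substDelta hv
  have hlt := τ.guard_freeT v h1
  by_contra hge
  push_neg at hge
  rcases h2 with h2 | h2
  · rw [stepσ, if_pos ⟨hge, hlt⟩] at h2
    cases h2
  · exact τ.guard_created (v - τ.pre.length) (by omega) (by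
      have : τ.pre.length + (v - τ.pre.length) = v := by omega
      rwa [this])

theorem freeC_Gp_char (τ : Transition P N Ω Ξ) :
    ∀ z ∈ (τ.guard.substDelta (stepσ τ)).freeC,
      ∃ j < τ.post.length, ∃ k : Fin N, z = τ.guard.cvarBound + j * N + k.val := by
  intro z hz
  rcases Formula.mem_freeC_substDelta hz with h1 | ⟨x, g, hg, k, hk⟩
  · rw [τ.guard_freeC] at h1
    cases h1
  · rw [stepσ] at hg
    by_cases hc : τ.pre.length ≤ x ∧ x < τ.pre.length + τ.post.length
    · rw [if_pos hc] at hg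
      simp only [Option.some.injEq] at hg
      refine ⟨x - τ.pre.length, by omega, k, ?_⟩
      rw [hk, ← hg]
    · rw [if_neg hc] at hg
      cases hg

end CML


namespace CML

variable {P : Type} {N : ℕ} {Ω : Type} {Ξ : Type} {C : Type}
variable (I : Interp C Ω Ξ)

theorem sat_G1 (τ : Transition P N Ω Ξ) (AT ACC : ℕ)
    (hAT : (τ.guard.substDelta (stepσ τ)).tvarSup ≤ AT)
    (hACC : (τ.guard.substDelta (stepσ τ)).cvarBound ≤ ACC)
    {M : Marking P N C} {θ : ℕ → ℕ} {ν : ℕ → C} {ts : List ℕ}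
    (hts : ts.length = τ.pre.length)
    (hθ : ∀ i, i < τ.pre.length → θ (AT + i) = ts.getD i 0) :
    ((((τ.guard.substDelta (stepσ τ)).substT (fun v => AT + v)).substC
        (fun z => ACC + z)).Sat I M θ ν ↔
      ∃ ν₀ : ℕ → C,
        (∀ j, j < τ.post.length → ∀ k : Fin N,
          ν₀ (τ.guard.cvarBound + j * N + k.val) =
            ν (ACC + (τ.guard.cvarBound + j * N + k.val))) ∧
        (τ.guard.substDelta (stepσ τ)).Sat I M (fun v => ts.getD v 0) ν₀) := by
  have hsubC : ((((τ.guard.substDelta (stepσ τ)).substT (fun v => AT + v)).substC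
      (fun z => ACC + z)).Sat I M θ ν ↔
      ((τ.guard.substDelta (stepσ τ)).substT (fun v => AT + v)).Sat I M θ
        (fun z => ν (ACC + z))) := by
    refine Formula.sat_substC (fun z' hz' v hv hσ => ?_)
    rw [Formula.boundC_substT] at hz'
    have := Formula.boundC_lt_cvarBound hz'
    omega
  have hsubT : ∀ ν' : ℕ → C, (((τ.guard.substDelta (stepσ τ)).substT
      (fun v => AT + v)).Sat I M θ ν' ↔
      (τ.guard.substDelta (stepσ τ)).Sat I M (fun v => θ (AT + v)) ν') := fun ν' => by
    refine Formula.sat_substT (fun x hx v hv hσ => ?_)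
    have := Formula.boundT_lt_tvarSup hx
    omega
  rw [hsubC, hsubT]
  constructor
  · intro h
    refine ⟨fun z => ν (ACC + z), fun j hj k => rfl, ?_⟩
    refine (Formula.sat_congr (fun v hv => ?_) (fun z _ => rfl)).1 h
    exact hθ v (freeT_Gp_lt τ v hv)
  · rintro ⟨ν₀, hν₀, h⟩
    refine (Formula.sat_congr (fun v hv => (hθ v (freeT_Gp_lt τ v hv)).symm)
      (fun z hz => ?_)).1 h
    obtain ⟨j, hj, k, rfl⟩ := freeC_Gp_char τ z hz
    exact hν₀ j hj k

theorem pretilde_transition [Nonempty C] (τ : Transition P N Ω Ξ) (hτ : InSigma 1 τ.guard)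
    {ψ : Formula P N Ω Ξ} (hψc : ψ.Closed) (hψ : InPi 1 ψ) :
    ∃ Φ : Formula P N Ω Ξ, InPi 1 Φ ∧ ∀ (M : Marking P N C) (θ : ℕ → ℕ) (ν : ℕ → C),
      (Φ.Sat I M θ ν ↔ ∀ M', τ.Step I M M' → M' ∈ ψ.models I) := by
  obtain ⟨AT, hAT1, hAT2⟩ : ∃ a, ψ.tvarSup ≤ a ∧
      (τ.guard.substDelta (stepσ τ)).tvarSup ≤ a :=
    ⟨max _ _, le_max_left _ _, le_max_right _ _⟩
  obtain ⟨ACC, hACC1, hACC2⟩ : ∃ a, ψ.cvarBound ≤ a ∧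
      (τ.guard.substDelta (stepσ τ)).cvarBound ≤ a :=
    ⟨max _ _, le_max_left _ _, le_max_right _ _⟩
  obtain ⟨Θ, hΘ, hspec⟩ := trans_lemma I τ.post τ.pre.length τ.post.length
    (fun i => AT + i) (fun j => AT + τ.pre.length + j)
    (fun j k => ACC + (τ.guard.cvarBound + j * N + k.val))
    (fun i k => ACC + τ.guard.cvarBound + τ.post.length * N + (i * N + k.val)) hψ
    (fun i _ => le_trans hAT1 (Nat.le_add_right _ _))
    (fun j _ => le_trans hAT1 (le_trans (Nat.le_add_right _ _) (Nat.le_add_right _ _)))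
    (fun j k => le_trans hACC1 (Nat.le_add_right _ _))
    (fun i k => le_trans hACC1 (le_trans (Nat.le_add_right _ _)
      (le_trans (Nat.le_add_right _ _) (Nat.le_add_right _ _))))
  have hG1sig : InSigma 1 (((τ.guard.substDelta (stepσ τ)).substT
      (fun v => AT + v)).substC (fun z => ACC + z)) :=
    ((hτ.one_substDelta _).one_substT _).one_substC _
  obtain ⟨nG, hnG, hsnG⟩ := hG1sig.one_neg_closure I
  obtain ⟨or1, hor1, hsor1⟩ := InPi.one_or_closure I hnG hΘ
  obtain ⟨body, hbody, hsbody⟩ := InPi.one_or_closure I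
    (InPi.of_sigma (.zero (.of_qf (.not (isQF_sideF (pre := τ.pre) (m := τ.post.length)
      (xv := fun i => AT + i) (uv := fun j => AT + τ.pre.length + j)))))) hor1
  refine ⟨allTs ((List.range τ.pre.length).map (fun i => AT + i) ++
      (List.range τ.post.length).map (fun j => AT + τ.pre.length + j))
    (allCs ((List.range τ.post.length).flatMap
        (fun j => List.ofFn (fun k : Fin N => ACC + (τ.guard.cvarBound + j * N + k.val))) ++
      (List.range τ.pre.length).flatMap
        (fun i => List.ofFn (fun k : Fin N =>
          ACC + τ.guard.cvarBound + τ.post.length * N + (i * N + k.val)))) body),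
    (hbody.one_allCs).one_allTs, ?_⟩
  intro M θ ν
  rw [sat_allTs]
  constructor
  · intro hΦ M' hstep
    rw [step_char] at hstep
    obtain ⟨ts, us, cs, ds, l1, l2, l3, l4, l5, l6, ⟨ν₀, hν₀, hsat₀⟩, rfl⟩ := hstep
    set θ' : ℕ → ℕ := fun v =>
      if AT ≤ v ∧ v < AT + τ.pre.length then ts.getD (v - AT) 0
      else if AT + τ.pre.length ≤ v ∧ v < AT + τ.pre.length + τ.post.length then
        us.getD (v - (AT + τ.pre.length)) 0
      else θ v with hθ'def
    set ν' : ℕ → C := fun z =>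
      if h1 : ACC + τ.guard.cvarBound ≤ z ∧
          z < ACC + τ.guard.cvarBound + τ.post.length * N ∧ 0 < N then
        cs ((z - (ACC + τ.guard.cvarBound)) / N)
          ⟨(z - (ACC + τ.guard.cvarBound)) % N, Nat.mod_lt _ h1.2.2⟩
      else if h2 : ACC + τ.guard.cvarBound + τ.post.length * N ≤ z ∧
          z < ACC + τ.guard.cvarBound + τ.post.length * N + τ.pre.length * N ∧ 0 < N then
        ds ((z - (ACC + τ.guard.cvarBound + τ.post.length * N)) / N)
          ⟨(z - (ACC + τ.guard.cvarBound + τ.post.length * N)) % N, Nat.mod_lt _ h2.2.2⟩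
      else ν z with hν'def
    have hθ'x : ∀ i, i < τ.pre.length → θ' (AT + i) = ts.getD i 0 := by
      intro i hi
      simp only [hθ'def]
      rw [if_pos ⟨by omega, by omega⟩]
      congr 1
      omega
    have hθ'u : ∀ j, j < τ.post.length → θ' (AT + τ.pre.length + j) = us.getD j 0 := by
      intro j hj
      simp only [hθ'def]
      rw [if_neg (by omega), if_pos ⟨by omega, by omega⟩]
      congr 1
      omega
    have hν'c : ∀ j, j < τ.post.length → ∀ k : Fin N,
        ν' (ACC + (τ.guard.cvarBound + j * N + k.val)) = cs j k := by
      intro j hj k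
      have hk := k.isLt
      have hNpos : 0 < N := lt_of_le_of_lt (Nat.zero_le _) hk
      have hjk : j * N + k.val < τ.post.length * N := by
        calc j * N + k.val < j * N + N := by omega
        _ = (j + 1) * N := by ring
        _ ≤ τ.post.length * N := Nat.mul_le_mul_right _ (by omega)
      simp only [hν'def]
      rw [dif_pos ⟨by omega, by omega, hNpos⟩]
      have e1 : ACC + (τ.guard.cvarBound + j * N + k.val) - (ACC + τ.guard.cvarBound) =
          k.val + j * N := by
        have e0 : ACC + (τ.guard.cvarBound + j * N + k.val) =
            (ACC + τ.guard.cvarBound) + (k.val + j * N) := by ring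
        rw [e0, Nat.add_sub_cancel_left]
      congr 1
      · rw [e1, Nat.add_mul_div_right _ _ hNpos, Nat.div_eq_of_lt hk, Nat.zero_add]
      · refine Fin.ext ?_
        simp only [e1]
        rw [Nat.add_mul_mod_self_right, Nat.mod_eq_of_lt hk]
    have hν'd : ∀ i, i < τ.pre.length → ∀ k : Fin N,
        ν' (ACC + τ.guard.cvarBound + τ.post.length * N + (i * N + k.val)) = ds i k := by
      intro i hi k
      have hk := k.isLt
      have hNpos : 0 < N := lt_of_le_of_lt (Nat.zero_le _) hk
      have hik : i * N + k.val < τ.pre.length * N := by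
        calc i * N + k.val < i * N + N := by omega
        _ = (i + 1) * N := by ring
        _ ≤ τ.pre.length * N := Nat.mul_le_mul_right _ (by omega)
      simp only [hν'def]
      rw [dif_neg (by omega), dif_pos ⟨by omega, by omega, hNpos⟩]
      have e1 : ACC + τ.guard.cvarBound + τ.post.length * N + (i * N + k.val) -
          (ACC + τ.guard.cvarBound + τ.post.length * N) = k.val + i * N := by
        have e0 : ACC + τ.guard.cvarBound + τ.post.length * N + (i * N + k.val) =
            (ACC + τ.guard.cvarBound + τ.post.length * N) + (k.val + i * N) := by ring
        rw [e0, Nat.add_sub_cancel_left]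
      congr 1
      · rw [e1, Nat.add_mul_div_right _ _ hNpos, Nat.div_eq_of_lt hk, Nat.zero_add]
      · refine Fin.ext ?_
        simp only [e1]
        rw [Nat.add_mul_mod_self_right, Nat.mod_eq_of_lt hk]
    have hdisj : ∀ t, t ∈ ts → t ∈ us → False := by
      intro t hts hus
      have hi := List.idxOf_lt_length_iff.2 hts
      have hj := List.idxOf_lt_length_iff.2 hus
      have e1 := l5 (ts.idxOf t) (by omega)
      have e2 := l6 (us.idxOf t) (by omega)
      rw [List.getD_indexOf' hts] at e1
      rw [List.getD_indexOf' hus] at e2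
      rw [e2] at e1
      have : τ.pre[ts.idxOf t]? = some (τ.pre[ts.idxOf t]'(by omega)) :=
        List.getElem?_eq_getElem _
      rw [← e1] at this
      simp at this
    have hθ'agree : ∀ v, v ∉ ((List.range τ.pre.length).map (fun i => AT + i) ++
        (List.range τ.post.length).map (fun j => AT + τ.pre.length + j)) → θ' v = θ v := by
      intro v hv
      simp only [hθ'def]
      rw [if_neg, if_neg]
      · rintro ⟨ha, hb⟩
        exact hv (by
          simp only [List.mem_append, List.mem_map, List.mem_range]
          exact Or.inr ⟨v - (AT + τ.pre.length), by omega, by omega⟩)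
      · rintro ⟨ha, hb⟩
        exact hv (by
          simp only [List.mem_append, List.mem_map, List.mem_range]
          exact Or.inl ⟨v - AT, by omega, by omega⟩)
    have hν'agree : ∀ z, z ∉ ((List.range τ.post.length).flatMap
        (fun j => List.ofFn (fun k : Fin N => ACC + (τ.guard.cvarBound + j * N + k.val))) ++
      (List.range τ.pre.length).flatMap
        (fun i => List.ofFn (fun k : Fin N =>
          ACC + τ.guard.cvarBound + τ.post.length * N + (i * N + k.val)))) → ν' z = ν z := by
      intro z hz
      simp only [hν'def]
      rw [dif_neg, dif_neg]
      · rintro ⟨ha, hb, hN⟩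
        refine hz ?_
        simp only [List.mem_append, List.mem_flatMap, List.mem_range, List.mem_ofFn]
        set a := z - (ACC + τ.guard.cvarBound + τ.post.length * N) with hadef
        refine Or.inr ⟨a / N, ?_, ⟨a % N, Nat.mod_lt _ hN⟩, ?_⟩
        · rw [Nat.div_lt_iff_lt_mul hN]
          omega
        · show ACC + τ.guard.cvarBound + τ.post.length * N + (a / N * N + a % N) = z
          have h2 : a / N * N + a % N = a := by
            rw [Nat.mul_comm]
            exact Nat.div_add_mod _ _
          rw [h2]
          omega
      · rintro ⟨ha, hb, hN⟩
        refine hz ?_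
        simp only [List.mem_append, List.mem_flatMap, List.mem_range, List.mem_ofFn]
        set a := z - (ACC + τ.guard.cvarBound) with hadef
        refine Or.inl ⟨a / N, ?_, ⟨a % N, Nat.mod_lt _ hN⟩, ?_⟩
        · rw [Nat.div_lt_iff_lt_mul hN]
          omega
        · show ACC + (τ.guard.cvarBound + a / N * N + a % N) = z
          have h2 : a / N * N + a % N = a := by
            rw [Nat.mul_comm]
            exact Nat.div_add_mod _ _
          have e0 : ACC + (τ.guard.cvarBound + a / N * N + a % N) =
              ACC + τ.guard.cvarBound + (a / N * N + a % N) := by ring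
          rw [e0, h2]
          omega
    have hbodySat := (sat_allCs I).1 (hΦ θ' hθ'agree) ν' hν'agree
    rw [hsbody M θ' ν'] at hbodySat
    have hsideSat : (sideF τ.pre τ.post.length (fun i => AT + i)
        (fun j => AT + τ.pre.length + j)).Sat I M θ' ν' := by
      rw [sat_sideF]
      refine ⟨fun i hi => ?_, fun j hj => ?_, fun i i' hi hi' hne => ?_,
        fun j j' hj hj' hne => ?_⟩
      · rw [hθ'x i hi]; exact l5 i hi
      · rw [hθ'u j hj]; exact l6 j hj
      · rw [hθ'x i hi, hθ'x i' hi']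
        exact (nodup_iff_getD.1 l3) i i' (by omega) (by omega) hne
      · rw [hθ'u j hj, hθ'u j' hj']
        exact (nodup_iff_getD.1 l4) j j' (by omega) (by omega) hne
    have hG1Sat : ((((τ.guard.substDelta (stepσ τ)).substT (fun v => AT + v)).substC
        (fun z => ACC + z)).Sat I M θ' ν') := by
      rw [sat_G1 I τ AT ACC hAT2 hACC2 l1 hθ'x]
      refine ⟨ν₀, fun j hj k => ?_, hsat₀⟩
      rw [hν₀ j hj k, hν'c j hj k]
    rcases hbodySat with hns | hbody2
    · exact absurd hsideSat hns
    rw [hsor1 M θ' ν'] at hbody2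
    rcases hbody2 with hng | hΘsat
    · rw [hsnG M θ' ν'] at hng
      exact absurd hG1Sat hng
    have hψupd := (hspec M θ' ν' ts us cs ds l1 l2 l3 l4 hdisj hθ'x hθ'u hν'c hν'd).1 hΘsat
    exact (Formula.mem_models_iff_sat hψc).2 hψupd
  · intro htarget θ' hθ'agree
    rw [sat_allCs]
    intro ν' hν'agree
    rw [hsbody M θ' ν']
    by_cases hside : (sideF τ.pre τ.post.length (fun i => AT + i)
        (fun j => AT + τ.pre.length + j)).Sat I M θ' ν'
    swap
    · exact Or.inl hside
    rw [hsor1 M θ' ν']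
    by_cases hg1 : ((((τ.guard.substDelta (stepσ τ)).substT (fun v => AT + v)).substC
        (fun z => ACC + z)).Sat I M θ' ν')
    swap
    · exact Or.inr (Or.inl ((hsnG M θ' ν').2 hg1))
    refine Or.inr (Or.inr ?_)
    set ts := (List.range τ.pre.length).map (fun i => θ' (AT + i)) with htsdef
    set us := (List.range τ.post.length).map (fun j => θ' (AT + τ.pre.length + j)) with husdef
    set cs : ℕ → Fin N → C := fun j k =>
      ν' (ACC + (τ.guard.cvarBound + j * N + k.val)) with hcsdef
    set ds : ℕ → Fin N → C := fun i k =>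
      ν' (ACC + τ.guard.cvarBound + τ.post.length * N + (i * N + k.val)) with hdsdef
    rw [sat_sideF] at hside
    obtain ⟨hs1, hs2, hs3, hs4⟩ := hside
    have hlen1 : ts.length = τ.pre.length := by simp [htsdef]
    have hlen2 : us.length = τ.post.length := by simp [husdef]
    have hts_getD : ∀ i, i < τ.pre.length → ts.getD i 0 = θ' (AT + i) := by
      intro i hi
      rw [htsdef]
      exact getD_map_range hi
    have hus_getD : ∀ j, j < τ.post.length → us.getD j 0 = θ' (AT + τ.pre.length + j) := by
      intro j hj
      rw [husdef]
      exact getD_map_range hj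
    have htsnodup : ts.Nodup := by
      rw [nodup_iff_getD]
      intro i j hi hj hne
      rw [hlen1] at hi hj
      rw [hts_getD i hi, hts_getD j hj]
      exact hs3 i j hi hj hne
    have husnodup : us.Nodup := by
      rw [nodup_iff_getD]
      intro i j hi hj hne
      rw [hlen2] at hi hj
      rw [hus_getD i hi, hus_getD j hj]
      exact hs4 i j hi hj hne
    have hdisj : ∀ t, t ∈ ts → t ∈ us → False := by
      intro t ht hu
      rw [htsdef, List.mem_map] at ht
      rw [husdef, List.mem_map] at hu
      obtain ⟨i, hi, rfl⟩ := ht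
      obtain ⟨j, hj, hji⟩ := hu
      rw [List.mem_range] at hi hj
      have e1 := hs1 i hi
      have e2 := hs2 j hj
      rw [hji] at e2
      rw [e2] at e1
      have : τ.pre[i]? = some (τ.pre[i]'hi) := List.getElem?_eq_getElem _
      rw [← e1] at this
      simp at this
    have hθ'x : ∀ i, i < τ.pre.length → θ' (AT + i) = ts.getD i 0 :=
      fun i hi => (hts_getD i hi).symm
    have hθ'u : ∀ j, j < τ.post.length → θ' (AT + τ.pre.length + j) = us.getD j 0 :=
      fun j hj => (hus_getD j hj).symm
    have hstep : τ.Step I M (updM M τ.post ts us cs ds) := by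
      rw [step_char]
      refine ⟨ts, us, cs, ds, hlen1, hlen2, htsnodup, husnodup,
        fun i hi => by rw [← hθ'x i hi]; exact hs1 i hi,
        fun j hj => by rw [← hθ'u j hj]; exact hs2 j hj, ?_, rfl⟩
      rw [sat_G1 I τ AT ACC hAT2 hACC2 hlen1 hθ'x] at hg1
      obtain ⟨ν₀, hν₀, hsat₀⟩ := hg1
      exact ⟨ν₀, fun j hj k => hν₀ j hj k, hsat₀⟩
    have hmem := htarget _ hstep
    have hψsat := (Formula.mem_models_iff_sat hψc (θ := θ') (ν := ν')).1 hmem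
    exact (hspec M θ' ν' ts us cs ds hlen1 hlen2 htsnodup husnodup hdisj hθ'x hθ'u
      (fun j hj k => rfl) (fun i hi k => rfl)).2 hψsat

end CML


namespace CML

variable {P : Type} {N : ℕ} {Ω : Type} {Ξ : Type} {C : Type}
variable (I : Interp C Ω Ξ)

theorem mem_preTilde {S : CPN P N Ω Ξ} {X : Set (Marking P N C)} {M : Marking P N C} :
    M ∈ CPN.preTilde I S X ↔ ∀ τ ∈ S.trans, ∀ M', τ.Step I M M' → M' ∈ X := by
  simp only [CPN.preTilde, CPN.pre, CPN.Step, Set.mem_compl_iff, Set.mem_setOf_eq]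
  constructor
  · intro h τ hτ M' hstep
    by_contra hc
    exact h ⟨M', hc, τ, hτ, hstep⟩
  · rintro h ⟨M', hM', τ, hτ, hstep⟩
    exact hM' (h τ hτ M' hstep)

theorem pretilde_pi1 [Nonempty C] (S : CPN P N Ω Ξ) (hS : S.GuardsIn (InSigma 1))
    {ψ : Formula P N Ω Ξ} (hψc : ψ.Closed) (hψ : InPi 1 ψ) :
    ∃ Φ : Formula P N Ω Ξ, Φ.Closed ∧ InPi 1 Φ ∧
      Φ.models I = CPN.preTilde I S (ψ.models I) := by
  have hlist : ∀ L : List (Transition P N Ω Ξ), (∀ τ ∈ L, InSigma 1 τ.guard) →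
      ∃ Φ₀ : Formula P N Ω Ξ, InPi 1 Φ₀ ∧ ∀ (M : Marking P N C) θ ν,
        (Φ₀.Sat I M θ ν ↔ ∀ τ ∈ L, ∀ M', τ.Step I M M' → M' ∈ ψ.models I) := by
    intro L hL
    induction L with
    | nil =>
        exact ⟨.tru, .of_sigma (.zero (.of_qf .tru)), fun M θ ν => by simp [Formula.Sat]⟩
    | cons τ L ihL =>
        obtain ⟨Φ₁, hΦ₁, hs₁⟩ := pretilde_transition I τ (hL τ (by simp)) hψc hψ
        obtain ⟨Φ₂, hΦ₂, hs₂⟩ := ihL (fun τ' hτ' => hL τ' (by simp [hτ']))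
        obtain ⟨Φ₀, hΦ₀, hs₀⟩ := InPi.one_and_closure I hΦ₁ hΦ₂
        refine ⟨Φ₀, hΦ₀, fun M θ ν => ?_⟩
        rw [hs₀ M θ ν, hs₁ M θ ν, hs₂ M θ ν]
        simp
  obtain ⟨Φ₀, hΦ₀, hs₀⟩ := hlist S.trans hS
  exact closed_pi1_of_defines I hΦ₀ (fun M θ ν => by rw [hs₀ M θ ν, mem_preTilde I])

theorem iic_zero_inter {X : Set (Marking P N C)} {f : Set (Marking P N C) → Set (Marking P N C)} :
    ⋂ i ∈ Set.Iic 0, f^[i] X = X := by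
  ext M
  simp [Set.mem_Iic, Nat.le_zero]

theorem iic_succ_inter (S : CPN P N Ω Ξ) {X : Set (Marking P N C)} {k : ℕ} :
    ⋂ i ∈ Set.Iic (k + 1), (CPN.preTilde I S)^[i] X =
      X ∩ CPN.preTilde I S (⋂ i ∈ Set.Iic k, (CPN.preTilde I S)^[i] X) := by
  ext M
  simp only [Set.mem_iInter, Set.mem_Iic, Set.mem_inter_iff]
  constructor
  · intro h
    refine ⟨h 0 (by omega), ?_⟩
    rw [mem_preTilde I]
    intro τ hτ M' hstep
    simp only [Set.mem_iInter, Set.mem_Iic]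
    intro i hi
    have := h (i + 1) (by omega)
    rw [Function.iterate_succ_apply'] at this
    rw [mem_preTilde I] at this
    exact this τ hτ M' hstep
  · rintro ⟨h0, hpre⟩ i hi
    cases i with
    | zero => exact h0
    | succ i =>
        rw [Function.iterate_succ_apply', mem_preTilde I]
        intro τ hτ M' hstep
        rw [mem_preTilde I] at hpre
        have := hpre τ hτ M' hstep
        simp only [Set.mem_iInter, Set.mem_Iic] at this
        exact this i (by omega)

end CML

namespace CML

/-- `Π₁`-definability of iterated `p̃re`: if `S` is a CPN all of whose
guards are in `Σ₁`, then for every closed `Π₁` formula `φ` and every positive integer `k`,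
there is a closed `Π₁` formula defining the set `⋂_{0 ≤ i ≤ k} p̃re_S^i(⟦φ⟧)`. -/
theorem iterated_preTilde_pi1_definable
    {P C Ω Ξ : Type} {N : ℕ} (I : Interp C Ω Ξ)
    (S : CPN P N Ω Ξ) (hS : S.GuardsIn (InSigma 1))
    (φ : Formula P N Ω Ξ) (hc : φ.Closed) (hφ : InPi 1 φ)
    (k : ℕ) (hk : 1 ≤ k) :
    ∃ ψ : Formula P N Ω Ξ, ψ.Closed ∧ InPi 1 ψ ∧
      ψ.models I = ⋂ i ∈ Set.Iic k, (CPN.preTilde I S)^[i] (φ.models I) := by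
  clear hk
  by_cases hC : Nonempty C
  · induction k with
    | zero => exact ⟨φ, hc, hφ, by rw [iic_zero_inter]⟩
    | succ k ihk =>
        obtain ⟨ψk, hψkc, hψk, hmk⟩ := ihk
        obtain ⟨Φp, hΦpc, hΦp, hmp⟩ := pretilde_pi1 I S hS hψkc hψk
        obtain ⟨ξ, hξ, hsξ⟩ := InPi.one_and_closure I hφ hΦp
        obtain ⟨Ψ, hΨc, hΨ, hm⟩ := closed_pi1_of_defines I hξ
          (X := φ.models I ∩ Φp.models I) (fun M θ ν => by
            rw [hsξ M θ ν, Set.mem_inter_iff]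
            rw [Formula.mem_models_iff_sat hc (θ := θ) (ν := ν),
              Formula.mem_models_iff_sat hΦpc (θ := θ) (ν := ν)])
        refine ⟨Ψ, hΨc, hΨ, ?_⟩
        rw [hm, hmp, hmk, iic_succ_inter I S]
  · have hempty : ∀ (ξ : Formula P N Ω Ξ), ξ.models I = (Set.univ : Set (Marking P N C)) := by
      intro ξ
      ext M
      simp only [Formula.models, Set.mem_setOf_eq, Set.mem_univ, iff_true]
      intro θ ν
      exact absurd ⟨ν 0⟩ hC
    have hpre : CPN.preTilde I S (Set.univ : Set (Marking P N C)) = Set.univ := by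
      ext M
      simp [mem_preTilde I]
    have hiter : ∀ i, (CPN.preTilde I S)^[i] (Set.univ : Set (Marking P N C)) = Set.univ := by
      intro i
      induction i with
      | zero => rfl
      | succ i ih => rw [Function.iterate_succ_apply', ih, hpre]
    refine ⟨φ, hc, hφ, ?_⟩
    rw [hempty φ]
    ext M
    simp [hiter]

end CML
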